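/- arXiv:2512.17428 — 8 statements merged into one kernel-verified Lean document; each statement's English description precedes it below -/
import Mathlib

section
/- Let n ≥ 2, p > 2, and let ψ, σ : (0,∞) → (0,∞) be C¹ positive functions such that ψ'(r)/ψ(r) ≥ σ'(r)/σ(r) for all r > 0 and ψ(s)/σ(s) → 1 as s → 0. Then for every r > 0: (∫₀^r ψ^{n-1} ds)^{1/p} · (∫_r^∞ ψ^{-(n-1)} ds)^{1/2} ≤ (∫₀^r σ^{n-1} ds)^{1/p} · (∫_r^∞ σ^{-(n-1)} ds)^{1/2}, where both sides may be +∞. -/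
open Set Filter MeasureTheory ENNReal

/-!
The hypothesis on logarithmic derivatives says that `ψ / σ` is nondecreasing, and since it tends
to `1` at `0` it is `≥ 1`. Writing `c = ψ(r) / σ(r) ≥ 1`, monotonicity gives `ψ ≤ c σ` on `(0, r]`
and `ψ ≥ c σ` on `(r, ∞)`, so with `m = n - 1` the two integrals for `ψ` are bounded by `c^m` and
`c^{-m}` times those for `σ`. The factor left over is `(c^m)^{1/p - 1/2} ≤ 1`, because `p ≥ 2`.
-/

theorem monotoneOn_div_of_logDeriv_le {f g : ℝ → ℝ} {D : Set ℝ} (hD : Convex ℝ D)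
    (hf : ∀ x ∈ D, DifferentiableAt ℝ f x) (hg : ∀ x ∈ D, DifferentiableAt ℝ g x)
    (hfpos : ∀ x ∈ D, 0 < f x) (hgpos : ∀ x ∈ D, 0 < g x)
    (hlog : ∀ x ∈ D, deriv g x / g x ≤ deriv f x / f x) :
    MonotoneOn (fun x => f x / g x) D := by
  have hdiff : ∀ x ∈ D, DifferentiableAt ℝ (fun x => f x / g x) x := fun x hx =>
    (hf x hx).div (hg x hx) (hgpos x hx).ne'
  refine monotoneOn_of_deriv_nonneg hD (fun x hx => (hdiff x hx).continuousAt.continuousWithinAt)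
    (fun x hx => (hdiff x (interior_subset hx)).differentiableWithinAt) fun x hx => ?_
  have hx := interior_subset hx
  rw [deriv_fun_div (hf x hx) (hg x hx) (hgpos x hx).ne']
  have h := (div_le_div_iff₀ (hgpos x hx) (hfpos x hx)).1 (hlog x hx)
  exact div_nonneg (by linarith) (sq_nonneg _)

theorem MonotoneOn.le_of_tendsto_nhdsGT {α β : Type*} [LinearOrder α] [TopologicalSpace α]
    [OrderTopology α] [DenselyOrdered α] [Preorder β] [TopologicalSpace β]
    [OrderClosedTopology β] {f : α → β} {a x : α} {l : β} (hf : MonotoneOn f (Ioi a))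
    (hlim : Tendsto f (nhdsWithin a (Ioi a)) (nhds l)) (hx : a < x) : l ≤ f x := by
  have : NeBot (nhdsWithin a (Ioi a)) := nhdsGT_neBot_of_exists_gt ⟨x, hx⟩
  refine le_of_tendsto hlim ?_
  filter_upwards [Ioo_mem_nhdsGT hx] with t ht
  exact hf ht.1 hx ht.2.le

theorem lintegral_ofReal_le_mul_lintegral_ofReal {α : Type*} [MeasurableSpace α] {μ : Measure α}
    {S : Set α} (hS : MeasurableSet S) {f g : α → ℝ} {c : ℝ} (hc : 0 ≤ c)
    (hfg : ∀ x ∈ S, f x ≤ c * g x) :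
    ∫⁻ x in S, ENNReal.ofReal (f x) ∂μ ≤ ENNReal.ofReal c * ∫⁻ x in S, ENNReal.ofReal (g x) ∂μ := by
  rw [← lintegral_const_mul' _ _ ofReal_ne_top]
  refine setLIntegral_mono' hS fun x hx => ?_
  rw [← ENNReal.ofReal_mul hc]
  exact ofReal_le_ofReal (hfg x hx)

theorem rpow_mul_rpow_le_of_le_mul_of_le_inv_mul {A A' B B' C : ℝ≥0∞} {α β : ℝ}
    (hC : 1 ≤ C) (hCtop : C ≠ ⊤) (hA : A ≤ C * A') (hB : B ≤ C⁻¹ * B')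
    (hα : 0 ≤ α) (hαβ : α ≤ β) :
    A ^ α * B ^ β ≤ A' ^ α * B' ^ β := by
  have hC0 : C ≠ 0 := (zero_lt_one.trans_le hC).ne'
  calc A ^ α * B ^ β ≤ (C * A') ^ α * (C⁻¹ * B') ^ β :=
        mul_le_mul' (rpow_le_rpow hA hα) (rpow_le_rpow hB (hα.trans hαβ))
    _ = C ^ (α - β) * (A' ^ α * B' ^ β) := by
        rw [mul_rpow_of_nonneg _ _ hα, mul_rpow_of_nonneg _ _ (hα.trans hαβ), inv_rpow,
          sub_eq_add_neg, rpow_add _ _ hC0 hCtop, rpow_neg]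
        ring
    _ ≤ A' ^ α * B' ^ β := by
        refine mul_le_of_le_one_left' ?_
        simpa using rpow_le_rpow_of_exponent_le hC (sub_nonpos.2 hαβ)

theorem muckenhoupt_comparison_general (n : ℕ) (p : ℝ) (hp : 2 < p)
    (ψ σ : ℝ → ℝ)
    (hψpos : ∀ r > (0:ℝ), 0 < ψ r) (hσpos : ∀ r > (0:ℝ), 0 < σ r)
    (hψdiff : ∀ r > (0:ℝ), DifferentiableAt ℝ ψ r)
    (hσdiff : ∀ r > (0:ℝ), DifferentiableAt ℝ σ r)
    (hlog : ∀ r > (0:ℝ), deriv σ r / σ r ≤ deriv ψ r / ψ r)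
    (hlim : Tendsto (fun s => ψ s / σ s) (nhdsWithin 0 (Ioi 0)) (nhds 1)) :
    ∀ r > (0:ℝ),
      (∫⁻ s in Ioc (0:ℝ) r, ENNReal.ofReal (ψ s ^ (n - 1))) ^ (1 / p)
          * (∫⁻ s in Ioi r, ENNReal.ofReal ((ψ s ^ (n - 1))⁻¹)) ^ (1 / 2 : ℝ)
        ≤ (∫⁻ s in Ioc (0:ℝ) r, ENNReal.ofReal (σ s ^ (n - 1))) ^ (1 / p)
          * (∫⁻ s in Ioi r, ENNReal.ofReal ((σ s ^ (n - 1))⁻¹)) ^ (1 / 2 : ℝ) := by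
  intro r hr
  have hmono : MonotoneOn (fun x => ψ x / σ x) (Ioi 0) :=
    monotoneOn_div_of_logDeriv_le (convex_Ioi 0) hψdiff hσdiff hψpos hσpos hlog
  set c := ψ r / σ r
  have hc : 1 ≤ c := hmono.le_of_tendsto_nhdsGT hlim hr
  have hc0 : 0 < c := zero_lt_one.trans_le hc
  have hψ_le : ∀ s ∈ Ioc 0 r, ψ s ^ (n - 1) ≤ c ^ (n - 1) * σ s ^ (n - 1) := fun s hs => by
    have hψc : ψ s ≤ c * σ s := (div_le_iff₀ (hσpos s hs.1)).1 (hmono hs.1 hr hs.2)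
    rw [← mul_pow]
    exact pow_le_pow_left₀ (hψpos s hs.1).le hψc _
  have hψ_inv_le : ∀ s ∈ Ioi r,
      (ψ s ^ (n - 1))⁻¹ ≤ (c ^ (n - 1))⁻¹ * (σ s ^ (n - 1))⁻¹ := fun s hs => by
    have hs0 : 0 < s := hr.trans hs
    have hcσ : c * σ s ≤ ψ s := (le_div_iff₀ (hσpos s hs0)).1 (hmono hr hs0 hs.le)
    have hcσ_pos : 0 < c * σ s := mul_pos hc0 (hσpos s hs0)
    rw [← mul_inv, ← mul_pow]
    exact inv_anti₀ (pow_pos hcσ_pos _) (pow_le_pow_left₀ hcσ_pos.le hcσ _)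
  refine rpow_mul_rpow_le_of_le_mul_of_le_inv_mul (C := ENNReal.ofReal (c ^ (n - 1)))
    (one_le_ofReal.2 (one_le_pow₀ hc)) ofReal_ne_top
    (lintegral_ofReal_le_mul_lintegral_ofReal measurableSet_Ioc (pow_nonneg hc0.le _) hψ_le) ?_
    (by positivity) (one_div_le_one_div_of_le two_pos hp.le)
  rw [← ofReal_inv_of_pos (pow_pos hc0 _)]
  exact lintegral_ofReal_le_mul_lintegral_ofReal measurableSet_Ioi
    (inv_nonneg.2 (pow_nonneg hc0.le _)) hψ_inv_le

/-- Inequality (3.1): comparison of Muckenhoupt-type quantities. If `ψ'/ψ ≥ σ'/σ` on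
`(0,∞)` and `ψ(s)/σ(s) → 1` as `s → 0⁺`, then for every `r > 0` and `p > 2`,
`(∫₀^r ψ^{n-1})^{1/p} (∫_r^∞ ψ^{-(n-1)})^{1/2} ≤ (∫₀^r σ^{n-1})^{1/p} (∫_r^∞ σ^{-(n-1)})^{1/2}`
(in the extended nonnegative reals, so both sides may be `∞`). -/
theorem muckenhoupt_comparison (n : ℕ) (hn : 2 ≤ n) (p : ℝ) (hp : 2 < p)
    (ψ σ : ℝ → ℝ)
    (hψpos : ∀ r > (0:ℝ), 0 < ψ r) (hσpos : ∀ r > (0:ℝ), 0 < σ r)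
    (hψdiff : ∀ r > (0:ℝ), DifferentiableAt ℝ ψ r)
    (hσdiff : ∀ r > (0:ℝ), DifferentiableAt ℝ σ r)
    (hlog : ∀ r > (0:ℝ), deriv σ r / σ r ≤ deriv ψ r / ψ r)
    (hlim : Tendsto (fun s => ψ s / σ s) (nhdsWithin 0 (Ioi 0)) (nhds 1)) :
    ∀ r > (0:ℝ),
      (∫⁻ s in Ioc (0:ℝ) r, ENNReal.ofReal (ψ s ^ (n - 1))) ^ (1 / p)
          * (∫⁻ s in Ioi r, ENNReal.ofReal ((ψ s ^ (n - 1))⁻¹)) ^ (1 / 2 : ℝ)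
        ≤ (∫⁻ s in Ioc (0:ℝ) r, ENNReal.ofReal (σ s ^ (n - 1))) ^ (1 / p)
          * (∫⁻ s in Ioi r, ENNReal.ofReal ((σ s ^ (n - 1))⁻¹)) ^ (1 / 2 : ℝ) :=
  muckenhoupt_comparison_general n p hp ψ σ hψpos hσpos hψdiff hσdiff hlog hlim
end

section
/- Let n ≥ 2, α > 1 and p ≥ 2*_α := 2(α(n-1)+1)/(α(n-1)-1), with p ≤ 2n/(n-2) if n ≥ 3. Let ψ be a continuous positive function on (0,∞) with κ₁ r ≤ ψ(r) ≤ κ₂ r near 0 (for some κ₁,κ₂>0) and κ₁ r^α ≤ ψ(r) ≤ κ₂ r^α for r large. Then sup_{r>0} (∫₀^r ψ^{n-1} ds)^{1/p} (∫_r^∞ ψ^{-(n-1)} ds)^{1/2} < ∞. -/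
/-!
Write `w = ψ ^ (n - 1)`, `a = α (n - 1)` and `e = 2n / p`. Compactness of `[δ/2, 1]` and `[1, R]`
turns the comparisons near `0` and near `∞` into global bounds `w s ≲ s ^ (n - 1) + s ^ a`,
`1 / w s ≲ s ^ (-a)` and `1 / w s ≲ s ^ (-(e + 1))`, the last because `n - 2 ≤ e ≤ a - 1` by
the assumptions on `p`. Integrating, the quantity is `≲ r ^ (n / p - e / 2) = 1` for `r ≤ 1`
and `≲ r ^ ((a + 1) / p - (a - 1) / 2) ≤ 1` for `r ≥ 1`; the last exponent is nonpositive
exactly when `p ≥ 2 (a + 1) / (a - 1)`.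
-/

open Set MeasureTheory intervalIntegral

lemma exists_le_mul_rpow_union_of_isCompact {f : ℝ → ℝ} {S K : Set ℝ} {C u : ℝ}
    (hC : 0 ≤ C) (hS : ∀ s ∈ S, f s ≤ C * s ^ u) (hS0 : S ⊆ Ioi 0)
    (hK : IsCompact K) (hK0 : K ⊆ Ioi 0) (hf : ContinuousOn f K) :
    ∃ C' ≥ 0, ∀ s ∈ S ∪ K, f s ≤ C' * s ^ u := by
  have hquot : ContinuousOn (fun s => f s / s ^ u) K :=
    hf.div (continuousOn_id.rpow_const fun s hs => .inl (hK0 hs).ne')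
      fun s hs => (Real.rpow_pos_of_pos (hK0 hs) u).ne'
  obtain ⟨M, hM⟩ := hK.bddAbove_image hquot
  refine ⟨max C M, hC.trans (le_max_left _ _), ?_⟩
  rintro s (hs | hs)
  · exact (hS s hs).trans <| mul_le_mul_of_nonneg_right (le_max_left _ _)
      (Real.rpow_nonneg (hS0 hs).le u)
  · have hsu : 0 < s ^ u := Real.rpow_pos_of_pos (hK0 hs) u
    calc f s = f s / s ^ u * s ^ u := (div_mul_cancel₀ _ hsu.ne').symm
      _ ≤ max C M * s ^ u :=
        mul_le_mul_of_nonneg_right ((hM ⟨s, hs, rfl⟩).trans (le_max_right _ _)) hsu.le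

lemma exists_le_mul_rpow_Ioc_and_Ici {f : ℝ → ℝ} {δ R C a b : ℝ}
    (hf : ContinuousOn f (Ioi 0)) (hδ : 0 < δ) (hR : 0 < R) (hC : 0 ≤ C)
    (h_zero : ∀ s ∈ Ioo 0 δ, f s ≤ C * s ^ b) (h_top : ∀ s ≥ R, f s ≤ C * s ^ a) :
    ∃ C' ≥ 0, (∀ s ∈ Ioc 0 1, f s ≤ C' * s ^ b) ∧ ∀ s ≥ 1, f s ≤ C' * s ^ a := by
  have hK_zero : Icc (δ / 2) 1 ⊆ Ioi 0 := fun s hs => (half_pos hδ).trans_le hs.1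
  have hK_top : Icc 1 R ⊆ Ioi 0 := fun s hs => one_pos.trans_le hs.1
  obtain ⟨C₀, hC₀, h₀⟩ := exists_le_mul_rpow_union_of_isCompact hC h_zero Ioo_subset_Ioi_self
    isCompact_Icc hK_zero (hf.mono hK_zero)
  obtain ⟨C₁, hC₁, h₁⟩ := exists_le_mul_rpow_union_of_isCompact hC h_top
    (fun s hs => hR.trans_le hs) isCompact_Icc hK_top (hf.mono hK_top)
  refine ⟨max C₀ C₁, hC₀.trans (le_max_left _ _), fun s hs => ?_, fun s hs => ?_⟩
  · have hs' : s ∈ Ioo 0 δ ∪ Icc (δ / 2) 1 := by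
      rcases lt_or_ge s δ with h | h
      · exact .inl ⟨hs.1, h⟩
      · exact .inr ⟨by linarith, hs.2⟩
    exact (h₀ s hs').trans <| mul_le_mul_of_nonneg_right (le_max_left _ _)
      (Real.rpow_nonneg hs.1.le b)
  · have hs' : s ∈ Ici R ∪ Icc 1 R := by
      rcases le_total R s with h | h
      · exact .inl h
      · exact .inr ⟨hs, h⟩
    exact (h₁ s hs').trans <| mul_le_mul_of_nonneg_right (le_max_right _ _)
      (Real.rpow_nonneg (one_pos.trans_le hs).le a)

lemma exists_le_mul_rpow_add_rpow {f : ℝ → ℝ} {δ R C a b : ℝ}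
    (hf : ContinuousOn f (Ioi 0)) (hδ : 0 < δ) (hR : 0 < R) (hC : 0 ≤ C)
    (h_zero : ∀ s ∈ Ioo 0 δ, f s ≤ C * s ^ b) (h_top : ∀ s ≥ R, f s ≤ C * s ^ a) :
    ∃ C' ≥ 0, ∀ s > 0, f s ≤ C' * (s ^ b + s ^ a) := by
  obtain ⟨C', hC', h₀, h₁⟩ := exists_le_mul_rpow_Ioc_and_Ici hf hδ hR hC h_zero h_top
  refine ⟨C', hC', fun s hs => ?_⟩
  have hb := Real.rpow_nonneg hs.le b
  have ha := Real.rpow_nonneg hs.le a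
  rcases le_total s 1 with h | h
  · nlinarith [h₀ s ⟨hs, h⟩, mul_nonneg hC' ha]
  · nlinarith [h₁ s h, mul_nonneg hC' hb]

lemma exists_le_mul_rpow {f : ℝ → ℝ} {δ R C a b t : ℝ}
    (hf : ContinuousOn f (Ioi 0)) (hδ : 0 < δ) (hR : 0 < R) (hC : 0 ≤ C)
    (h_zero : ∀ s ∈ Ioo 0 δ, f s ≤ C * s ^ b) (h_top : ∀ s ≥ R, f s ≤ C * s ^ a)
    (hat : a ≤ t) (htb : t ≤ b) :
    ∃ C', ∀ s > 0, f s ≤ C' * s ^ t := by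
  obtain ⟨C', hC', h₀, h₁⟩ := exists_le_mul_rpow_Ioc_and_Ici hf hδ hR hC h_zero h_top
  refine ⟨C', fun s hs => ?_⟩
  rcases le_total s 1 with h | h
  · exact (h₀ s ⟨hs, h⟩).trans <|
      mul_le_mul_of_nonneg_left (Real.rpow_le_rpow_of_exponent_ge hs h htb) hC'
  · exact (h₁ s h).trans <|
      mul_le_mul_of_nonneg_left (Real.rpow_le_rpow_of_exponent_le h hat) hC'

lemma intervalIntegral_le_mul_rpow_add_rpow {f : ℝ → ℝ} {r C a b : ℝ} (hr : 0 ≤ r)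
    (ha : -1 < a) (hb : -1 < b) (hf0 : ∀ s ∈ Ioc 0 r, 0 ≤ f s)
    (hf : ∀ s ∈ Ioc 0 r, f s ≤ C * (s ^ b + s ^ a)) :
    ∫ s in 0..r, f s ≤ C * (r ^ (b + 1) / (b + 1) + r ^ (a + 1) / (a + 1)) := by
  have hint : IntervalIntegrable (fun s : ℝ => C * (s ^ b + s ^ a)) volume 0 r :=
    ((intervalIntegrable_rpow' hb).add (intervalIntegrable_rpow' ha)).const_mul C
  calc ∫ s in 0..r, f s ≤ ∫ s in 0..r, C * (s ^ b + s ^ a) := by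
        rw [integral_of_le hr, integral_of_le hr]
        exact integral_mono_of_nonneg ((ae_restrict_iff' measurableSet_Ioc).2 (.of_forall hf0))
          hint.1 ((ae_restrict_iff' measurableSet_Ioc).2 (.of_forall hf))
    _ = C * (r ^ (b + 1) / (b + 1) + r ^ (a + 1) / (a + 1)) := by
        rw [intervalIntegral.integral_const_mul, integral_add (intervalIntegrable_rpow' hb)
          (intervalIntegrable_rpow' ha), integral_rpow (.inl hb), integral_rpow (.inl ha),
          Real.zero_rpow (by linarith), Real.zero_rpow (by linarith), sub_zero, sub_zero]

lemma intervalIntegral_le_mul_rpow {f : ℝ → ℝ} {r C a b c : ℝ} (hr : 0 ≤ r) (hC : 0 ≤ C)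
    (ha : -1 < a) (hb : -1 < b) (hf0 : ∀ s ∈ Ioc 0 r, 0 ≤ f s)
    (hf : ∀ s ∈ Ioc 0 r, f s ≤ C * (s ^ b + s ^ a))
    (hbc : r ^ (b + 1) ≤ r ^ c) (hac : r ^ (a + 1) ≤ r ^ c) :
    ∫ s in 0..r, f s ≤ C * (1 / (b + 1) + 1 / (a + 1)) * r ^ c := by
  have hb1 : 0 < b + 1 := by linarith
  have ha1 : 0 < a + 1 := by linarith
  calc ∫ s in 0..r, f s ≤ C * (r ^ (b + 1) / (b + 1) + r ^ (a + 1) / (a + 1)) :=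
        intervalIntegral_le_mul_rpow_add_rpow hr ha hb hf0 hf
    _ ≤ C * (r ^ c / (b + 1) + r ^ c / (a + 1)) := by gcongr
    _ = C * (1 / (b + 1) + 1 / (a + 1)) * r ^ c := by ring

lemma setIntegral_Ioi_le_mul_rpow {f : ℝ → ℝ} {r C t : ℝ} (hr : 0 < r) (ht : 1 < t)
    (hf0 : ∀ s ∈ Ioi r, 0 ≤ f s) (hf : ∀ s ∈ Ioi r, f s ≤ C * s ^ (-t)) :
    ∫ s in Ioi r, f s ≤ C / (t - 1) * r ^ (-(t - 1)) := by
  calc ∫ s in Ioi r, f s ≤ ∫ s in Ioi r, C * s ^ (-t) :=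
        integral_mono_of_nonneg ((ae_restrict_iff' measurableSet_Ioi).2 (.of_forall hf0))
          ((integrableOn_Ioi_rpow_of_lt (by linarith) hr).const_mul C)
          ((ae_restrict_iff' measurableSet_Ioi).2 (.of_forall hf))
    _ = C / (t - 1) * r ^ (-(t - 1)) := by
        rw [MeasureTheory.integral_const_mul, integral_Ioi_rpow_of_lt (by linarith) hr,
          show -t + 1 = -(t - 1) by ring, neg_div, div_neg]
        ring

lemma rpow_mul_rpow_le_of_le {x y A B r β γ u v : ℝ} (hr : 0 < r) (hx : 0 ≤ x) (hy : 0 ≤ y)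
    (hu : 0 ≤ u) (hv : 0 ≤ v) (hxA : x ≤ A * r ^ β) (hyB : y ≤ B * r ^ (-γ))
    (hr_pow : r ^ (β * u - γ * v) ≤ 1) :
    x ^ u * y ^ v ≤ A ^ u * B ^ v := by
  have hA : 0 ≤ A := nonneg_of_mul_nonneg_left (hx.trans hxA) (Real.rpow_pos_of_pos hr β)
  have hB : 0 ≤ B := nonneg_of_mul_nonneg_left (hy.trans hyB) (Real.rpow_pos_of_pos hr _)
  calc x ^ u * y ^ v ≤ (A * r ^ β) ^ u * (B * r ^ (-γ)) ^ v := by gcongr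
    _ = A ^ u * B ^ v * r ^ (β * u - γ * v) := by
        rw [Real.mul_rpow hA (by positivity), Real.mul_rpow hB (by positivity),
          ← Real.rpow_mul hr.le, ← Real.rpow_mul hr.le, sub_eq_add_neg, Real.rpow_add hr,
          neg_mul]
        ring
    _ ≤ A ^ u * B ^ v := mul_le_of_le_one_right (by positivity) hr_pow

noncomputable def muckenhouptQuantity (w : ℝ → ℝ) (p q r : ℝ) : ℝ :=
  (∫ s in 0..r, w s) ^ (1 / p) * (∫ s in Ioi r, (w s)⁻¹) ^ (1 / q)

theorem exists_muckenhoupt_bound_of_forall_le_rpow {w : ℝ → ℝ} {a b e p q C₁ C₂ C₃ : ℝ}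
    (hp : 0 < p) (hq : 0 < q) (hb : -1 < b) (hba : b ≤ a) (ha : 1 < a) (he : 0 < e)
    (h_zero : e / q ≤ (b + 1) / p) (h_top : (a + 1) / p ≤ (a - 1) / q) (hC₁ : 0 ≤ C₁)
    (hw0 : ∀ s > 0, 0 ≤ w s) (hw : ∀ s > 0, w s ≤ C₁ * (s ^ b + s ^ a))
    (hw_inv_zero : ∀ s > 0, (w s)⁻¹ ≤ C₂ * s ^ (-(e + 1)))
    (hw_inv_top : ∀ s > 0, (w s)⁻¹ ≤ C₃ * s ^ (-a)) :
    ∃ C, ∀ r > 0, muckenhouptQuantity w p q r ≤ C := by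
  set K := C₁ * (1 / (b + 1) + 1 / (a + 1))
  refine ⟨max (K ^ (1 / p) * (C₂ / e) ^ (1 / q)) (K ^ (1 / p) * (C₃ / (a - 1)) ^ (1 / q)),
    fun r hr => ?_⟩
  have hI0 : 0 ≤ ∫ s in 0..r, w s := by
    rw [integral_of_le hr.le]
    exact setIntegral_nonneg measurableSet_Ioc fun s hs => hw0 s hs.1
  have hJ0 : 0 ≤ ∫ s in Ioi r, (w s)⁻¹ :=
    setIntegral_nonneg measurableSet_Ioi fun s hs => inv_nonneg.2 (hw0 s (hr.trans hs))
  have hI {c : ℝ} := intervalIntegral_le_mul_rpow (c := c) hr.le hC₁ (by linarith) hb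
    (fun s hs => hw0 s hs.1) (fun s hs => hw s hs.1)
  have hJ_zero := setIntegral_Ioi_le_mul_rpow hr (by linarith : 1 < e + 1)
    (fun s hs => inv_nonneg.2 (hw0 s (hr.trans hs))) (fun s hs => hw_inv_zero s (hr.trans hs))
  have hJ_top := setIntegral_Ioi_le_mul_rpow hr ha
    (fun s hs => inv_nonneg.2 (hw0 s (hr.trans hs))) (fun s hs => hw_inv_top s (hr.trans hs))
  rw [add_sub_cancel_right] at hJ_zero
  rw [muckenhouptQuantity]
  rcases le_total r 1 with hr1 | hr1
  · refine le_max_of_le_left <| rpow_mul_rpow_le_of_le hr hI0 hJ0 (by positivity)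
      (by positivity) (hI le_rfl (Real.rpow_le_rpow_of_exponent_ge hr hr1 (by linarith)))
      hJ_zero <| Real.rpow_le_one hr.le hr1 ?_
    rw [mul_one_div, mul_one_div]
    linarith
  · refine le_max_of_le_right <| rpow_mul_rpow_le_of_le hr hI0 hJ0 (by positivity)
      (by positivity) (hI (Real.rpow_le_rpow_of_exponent_le hr1 (by linarith)) le_rfl)
      hJ_top <| Real.rpow_le_one_of_one_le_of_nonpos hr1 ?_
    rw [mul_one_div, mul_one_div]
    linarith

theorem exists_muckenhoupt_bound {w : ℝ → ℝ} {δ R C c a b e p q : ℝ}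
    (hw : ContinuousOn w (Ioi 0)) (hw0 : ∀ s > 0, 0 < w s) (hδ : 0 < δ) (hR : 0 < R)
    (hC : 0 ≤ C) (hc : 0 ≤ c)
    (h_zero : ∀ s ∈ Ioo 0 δ, w s ≤ C * s ^ b ∧ (w s)⁻¹ ≤ c * s ^ (-b))
    (h_top : ∀ s ≥ R, w s ≤ C * s ^ a ∧ (w s)⁻¹ ≤ c * s ^ (-a))
    (hp : 0 < p) (hq : 0 < q) (hb : -1 < b) (he : 0 < e) (hbe : b ≤ e + 1) (hea : e + 1 ≤ a)
    (h_exp_zero : e / q ≤ (b + 1) / p) (h_exp_top : (a + 1) / p ≤ (a - 1) / q) :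
    ∃ C, ∀ r > 0, muckenhouptQuantity w p q r ≤ C := by
  have hw_inv : ContinuousOn (fun s => (w s)⁻¹) (Ioi 0) := hw.inv₀ fun s hs => (hw0 s hs).ne'
  obtain ⟨C₁, hC₁0, hC₁⟩ := exists_le_mul_rpow_add_rpow hw hδ hR hC
    (fun s hs => (h_zero s hs).1) (fun s hs => (h_top s hs).1)
  obtain ⟨C₂, hC₂⟩ := exists_le_mul_rpow (t := -(e + 1)) hw_inv hδ hR hc
    (fun s hs => (h_zero s hs).2) (fun s hs => (h_top s hs).2) (by linarith) (by linarith)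
  obtain ⟨C₃, hC₃⟩ := exists_le_mul_rpow hw_inv hδ hR hc
    (fun s hs => (h_zero s hs).2) (fun s hs => (h_top s hs).2) le_rfl (by linarith)
  exact exists_muckenhoupt_bound_of_forall_le_rpow hp hq hb (by linarith) (by linarith) he
    h_exp_zero h_exp_top hC₁0 (fun s hs => (hw0 s hs).le) hC₁ hC₂ hC₃

lemma pow_le_mul_rpow_and_inv_pow_le_mul_rpow {x κ₁ κ₂ s α : ℝ} (m : ℕ) (hκ₁ : 0 < κ₁)
    (hs : 0 < s) (h : κ₁ * s ^ α ≤ x ∧ x ≤ κ₂ * s ^ α) :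
    x ^ m ≤ κ₂ ^ m * s ^ (α * m) ∧ (x ^ m)⁻¹ ≤ (κ₁ ^ m)⁻¹ * s ^ (-(α * m)) := by
  have hpow (κ : ℝ) : (κ * s ^ α) ^ m = κ ^ m * s ^ (α * m) := by
    rw [mul_pow, ← Real.rpow_natCast (s ^ α), ← Real.rpow_mul hs.le]
  have hlow : 0 < κ₁ * s ^ α := by positivity
  refine ⟨hpow κ₂ ▸ pow_le_pow_left₀ (hlow.le.trans h.1) h.2 m, ?_⟩
  rw [Real.rpow_neg hs.le, ← mul_inv, ← hpow κ₁]
  exact inv_anti₀ (by positivity) (pow_le_pow_left₀ hlow.le h.1 m)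

lemma div_le_sub_one_div_two_of_le {a p : ℝ} (ha : 1 < a)
    (hp : 2 * (a + 1) / (a - 1) ≤ p) : (a + 1) / p ≤ (a - 1) / 2 := by
  have hp0 : 0 < p := (div_pos (by linarith) (by linarith)).trans_le hp
  rw [div_le_iff₀ (by linarith)] at hp
  rw [div_le_div_iff₀ hp0 two_pos]
  linarith

lemma two_mul_div_add_one_le {a n p : ℝ} (ha : 1 < a) (hna : n ≤ a + 1)
    (hp : 2 * (a + 1) / (a - 1) ≤ p) : 2 * n / p + 1 ≤ a := by
  have hp0 : 0 < p := (div_pos (by linarith) (by linarith)).trans_le hp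
  have ha1 : 0 < a + 1 := by linarith
  have : 2 * n / p ≤ a - 1 :=
    calc 2 * n / p = 2 * (n / (a + 1)) * ((a + 1) / p) := by field_simp
      _ ≤ 2 * 1 * ((a - 1) / 2) := by
          gcongr 2 * ?_ * ?_
          · exact div_le_one_of_le₀ hna ha1.le
          · exact div_le_sub_one_div_two_of_le ha hp
      _ = a - 1 := by ring
  linarith

lemma sub_one_le_two_mul_div_add_one {n p : ℝ} (hn : 0 ≤ n) (hp : 0 < p)
    (hp' : 2 < n → p ≤ 2 * n / (n - 2)) : n - 1 ≤ 2 * n / p + 1 := by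
  rcases le_or_gt n 2 with hn2 | hn2
  · have : 0 ≤ 2 * n / p := by positivity
    linarith
  · have : n - 2 ≤ 2 * n / p := by
      rw [le_div_iff₀ hp]
      linarith [(le_div_iff₀ (sub_pos.2 hn2)).1 (hp' hn2)]
    linarith

/-- Corollary 3.2 (continuity of the embedding): for a weight `ψ` comparable to `r`
near `0` and to `r^α` at infinity, and `2*_α ≤ p` (with `p ≤ 2*` if `n ≥ 3`), the
one-dimensional Muckenhoupt quantity is uniformly bounded in `r > 0`. -/
theorem muckenhoupt_bounded (n : ℕ) (hn : 2 ≤ n) (α : ℝ) (hα : 1 < α)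
    (p : ℝ) (hp : 2 * (α * (n - 1) + 1) / (α * (n - 1) - 1) ≤ p)
    (hp' : 3 ≤ n → p ≤ 2 * n / ((n : ℝ) - 2))
    (ψ : ℝ → ℝ)
    (hcont : ContinuousOn ψ (Ioi 0))
    (hpos : ∀ r > (0:ℝ), 0 < ψ r)
    (κ₁ κ₂ : ℝ) (hκ₁ : 0 < κ₁) (hκ₂ : 0 < κ₂)
    (δ : ℝ) (hδ : 0 < δ)
    (h0 : ∀ r ∈ Ioo (0:ℝ) δ, κ₁ * r ≤ ψ r ∧ ψ r ≤ κ₂ * r)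
    (R : ℝ) (hR : 0 < R)
    (hinf : ∀ r ≥ R, κ₁ * r ^ α ≤ ψ r ∧ ψ r ≤ κ₂ * r ^ α) :
    ∃ C : ℝ, ∀ r > (0:ℝ),
      (∫ s in (0:ℝ)..r, ψ s ^ (n - 1)) ^ (1 / p)
          * (∫ s in Ioi r, (ψ s ^ (n - 1))⁻¹) ^ (1 / 2 : ℝ) ≤ C := by
  set m := n - 1 with hm_def
  have hm : (m : ℝ) = n - 1 := by rw [hm_def, Nat.cast_sub (by omega), Nat.cast_one]
  have hn2 : (2 : ℝ) ≤ n := by exact_mod_cast hn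
  rw [← hm] at hp
  have ha : 1 < α * m := by nlinarith
  have hp0 : 0 < p := (div_pos (by linarith) (by linarith)).trans_le hp
  have h_zero (s : ℝ) (hs : s ∈ Ioo 0 δ) :
      ψ s ^ m ≤ κ₂ ^ m * s ^ (m : ℝ) ∧ (ψ s ^ m)⁻¹ ≤ (κ₁ ^ m)⁻¹ * s ^ (-(m : ℝ)) := by
    simpa only [one_mul] using pow_le_mul_rpow_and_inv_pow_le_mul_rpow (α := 1) m hκ₁ hs.1
      (by simpa only [Real.rpow_one] using h0 s hs)
  have h_top (s : ℝ) (hs : s ≥ R) :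
      ψ s ^ m ≤ κ₂ ^ m * s ^ (α * m) ∧ (ψ s ^ m)⁻¹ ≤ (κ₁ ^ m)⁻¹ * s ^ (-(α * m)) :=
    pow_le_mul_rpow_and_inv_pow_le_mul_rpow m hκ₁ (hR.trans_le hs) (hinf s hs)
  refine exists_muckenhoupt_bound (e := 2 * n / p) (hcont.pow m)
    (fun s hs => pow_pos (hpos s hs) m) hδ hR (by positivity) (by positivity) h_zero h_top
    hp0 two_pos (by linarith) (by positivity)
    (hm ▸ sub_one_le_two_mul_div_add_one (by linarith) hp0 fun h => hp' (by exact_mod_cast h))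
    (two_mul_div_add_one_le ha (by nlinarith) hp) ?_ (div_le_sub_one_div_two_of_le ha hp)
  rw [hm, sub_add_cancel, div_right_comm, mul_div_cancel_left₀ _ two_ne_zero]
end

section
/- Let n ≥ 2, α > 1 and 2*_α < p < 2* (where 2* = 2n/(n-2) if n ≥ 3, 2* = ∞ if n = 2). Let ψ be as above (comparable to r near 0 and to r^α at infinity). Then (∫₀^r ψ^{n-1} ds)^{1/p} (∫_r^∞ ψ^{-(n-1)} ds)^{1/2} tends to 0 both as r → 0 and as r → ∞. -/
open Set Filter MeasureTheory intervalIntegral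

open Asymptotics Topology

/-!
Write `w = ψ ^ (n - 1)`, `F r = ∫₀^r w` and `G r = ∫_r^∞ w⁻¹`, so that the quantity is
`F r ^ (1/p) * G r ^ (1/2)`, and it suffices to bound `F` and `G` by powers of `r`.

Near `0`, `w ≍ s ^ (n - 1)`, so `F r = O(r ^ n)`; `G r` blows up like `r ^ (2 - n)` (like `log r`
when `n = 2`), and the bound `s ^ (1 - n) ≤ t ^ ε * s ^ (1 - n - ε)` on `(0, t]` gives
`G r = O(r ^ (2 - n - ε))` for every `ε > 0`. The product is then `O(r ^ (n/p - (n - 2 + ε)/2))`,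
a positive power of `r` for small `ε` precisely because `p < 2n/(n-2)`.

At infinity, `w ≍ s ^ a` with `a = α (n - 1) > 1`, so `F r = O(r ^ (a + 1))` and
`G r = O(r ^ (1 - a))`; the product is `O(r ^ ((a + 1)/p - (a - 1)/2))`, a negative power of `r`
precisely because `p > 2 (a + 1)/(a - 1) = 2*_α`.
-/

noncomputable def muckenhoupt (w : ℝ → ℝ) (p r : ℝ) : ℝ :=
  (∫ s in (0:ℝ)..r, w s) ^ (1 / p) * (∫ s in Ioi r, (w s)⁻¹) ^ (1 / 2 : ℝ)

lemma tendsto_rpow_nhdsGT_zero {q : ℝ} (hq : 0 < q) :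
    Tendsto (fun r : ℝ => r ^ q) (𝓝[>] 0) (𝓝 0) := by
  simpa [Real.zero_rpow hq.ne'] using
    (Real.continuousAt_rpow_const 0 q (Or.inr hq.le)).tendsto.mono_left nhdsWithin_le_nhds

lemma tendsto_rpow_mul_rpow_of_isBigO {l : Filter ℝ} {F G : ℝ → ℝ} {x y a b : ℝ}
    (hx : 0 ≤ x) (hy : 0 ≤ y) (hl : ∀ᶠ r in l, 0 < r)
    (hF : F =O[l] fun r => r ^ a) (hG : G =O[l] fun r => r ^ b)
    (hlim : Tendsto (fun r => r ^ (a * x + b * y)) l (𝓝 0)) :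
    Tendsto (fun r => F r ^ x * G r ^ y) l (𝓝 0) := by
  have hFx := hF.rpow hx (hl.mono fun r hr => Real.rpow_nonneg hr.le a)
  have hGy := hG.rpow hy (hl.mono fun r hr => Real.rpow_nonneg hr.le b)
  refine (hFx.mul hGy).trans_tendsto (hlim.congr' ?_)
  filter_upwards [hl] with r hr
  rw [← Real.rpow_mul hr.le, ← Real.rpow_mul hr.le, ← Real.rpow_add hr]

lemma pow_mem_Icc_mul_rpow {x κ₁ κ₂ s e : ℝ} (k : ℕ) (hκ₁ : 0 ≤ κ₁) (hs : 0 ≤ s)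
    (h : x ∈ Icc (κ₁ * s ^ e) (κ₂ * s ^ e)) :
    x ^ k ∈ Icc (κ₁ ^ k * s ^ (e * k)) (κ₂ ^ k * s ^ (e * k)) := by
  have h₀ : 0 ≤ κ₁ * s ^ e := by positivity
  rw [Real.rpow_mul_natCast hs, ← mul_pow, ← mul_pow]
  exact ⟨pow_le_pow_left₀ h₀ h.1 k, pow_le_pow_left₀ (h₀.trans h.1) h.2 k⟩

lemma norm_inv_le_inv_mul_rpow_neg {x c s e : ℝ} (hc : 0 < c) (hs : 0 < s)
    (h : c * s ^ e ≤ x) : ‖x⁻¹‖ ≤ c⁻¹ * s ^ (-e) := by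
  have h₀ : 0 < c * s ^ e := by positivity
  rw [Real.norm_of_nonneg (inv_nonneg.2 (h₀.trans_le h).le), Real.rpow_neg hs.le, ← mul_inv]
  exact inv_anti₀ h₀ h

lemma norm_setIntegral_le_of_norm_le_mul_rpow_neg {f : ℝ → ℝ} {s : Set ℝ} {r b C : ℝ}
    (hr : 0 < r) (hb : 1 < b) (hC : 0 ≤ C) (hs : MeasurableSet s) (hsr : s ⊆ Ioi r)
    (hf : ∀ x ∈ s, ‖f x‖ ≤ C * x ^ (-b)) :
    ‖∫ x in s, f x‖ ≤ C / (b - 1) * r ^ (1 - b) := by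
  have hint : IntegrableOn (fun x : ℝ => C * x ^ (-b)) (Ioi r) :=
    (integrableOn_Ioi_rpow_of_lt (by linarith) hr).const_mul C
  calc ‖∫ x in s, f x‖ ≤ ∫ x in s, ‖f x‖ := norm_integral_le_integral_norm _
    _ ≤ ∫ x in s, C * x ^ (-b) :=
      integral_mono_of_nonneg (ae_of_all _ fun _ => norm_nonneg _) (hint.mono_set hsr)
        ((ae_restrict_iff' hs).2 (ae_of_all _ hf))
    _ ≤ ∫ x in Ioi r, C * x ^ (-b) :=
      setIntegral_mono_set hint ((ae_restrict_iff' measurableSet_Ioi).2 (ae_of_all _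
        fun x hx => mul_nonneg hC (Real.rpow_nonneg (hr.trans hx).le _))) hsr.eventuallyLE
    _ = C / (b - 1) * r ^ (1 - b) := by
      rw [MeasureTheory.integral_const_mul, integral_Ioi_rpow_of_lt (by linarith) hr,
        show -b + 1 = -(b - 1) by ring, neg_div_neg_eq, neg_sub]
      ring

lemma norm_integral_zero_le_of_norm_le_mul_rpow {f : ℝ → ℝ} {r B a : ℝ} (hr : 0 < r)
    (hf : ∀ s ∈ Ioc 0 r, ‖f s‖ ≤ B * r ^ a) :
    ‖∫ s in (0:ℝ)..r, f s‖ ≤ B * ‖r ^ (a + 1)‖ := by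
  calc ‖∫ s in (0:ℝ)..r, f s‖ ≤ B * r ^ a * |r - 0| :=
        norm_integral_le_of_norm_le_const (by rwa [uIoc_of_le hr.le])
    _ = B * ‖r ^ (a + 1)‖ := by
      rw [sub_zero, abs_of_pos hr, Real.norm_of_nonneg (Real.rpow_nonneg hr.le _),
        Real.rpow_add_one hr.ne', mul_assoc]

section Weight

variable {w : ℝ → ℝ}

lemma exists_norm_le_on_Ioc (hw : ContinuousOn w (Ioi 0)) {δ M : ℝ} (hδ : 0 < δ)
    (h0 : ∀ s ∈ Ioo 0 δ, ‖w s‖ ≤ M) (T : ℝ) : ∃ M' ≥ 0, ∀ s ∈ Ioc 0 T, ‖w s‖ ≤ M' := by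
  obtain ⟨K, hK⟩ := (isCompact_Icc (a := δ) (b := T)).exists_bound_of_continuousOn
    (hw.mono fun s hs => hδ.trans_le hs.1)
  refine ⟨max (max M K) 0, le_max_right _ _, fun s hs => ?_⟩
  rcases lt_or_ge s δ with hsδ | hsδ
  · exact (h0 s ⟨hs.1, hsδ⟩).trans ((le_max_left _ _).trans (le_max_left _ _))
  · exact (hK s ⟨hsδ, hs.2⟩).trans ((le_max_right _ _).trans (le_max_left _ _))

lemma integrableOn_inv_Ioi (hw : ContinuousOn w (Ioi 0)) (hw₀ : ∀ s > 0, w s ≠ 0)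
    {c R a : ℝ} (hc : 0 < c) (ha : 1 < a) (hinf : ∀ s ≥ R, c * s ^ a ≤ w s)
    {r : ℝ} (hr : 0 < r) : IntegrableOn (fun s => (w s)⁻¹) (Ioi r) := by
  have hloc : LocallyIntegrableOn (fun s => (w s)⁻¹) (Ici r) :=
    ((hw.inv₀ hw₀).mono fun s hs => hr.trans_le hs).locallyIntegrableOn measurableSet_Ici
  have hO : (fun s => (w s)⁻¹) =O[atTop] fun s => s ^ (-a) := by
    refine IsBigO.of_bound c⁻¹ ?_
    filter_upwards [eventually_ge_atTop R, eventually_gt_atTop 0] with s hsR hs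
    rw [Real.norm_of_nonneg (Real.rpow_nonneg hs.le _)]
    exact norm_inv_le_inv_mul_rpow_neg hc hs (hinf s hsR)
  exact (hloc.integrableOn_of_isBigO_atTop hO
    (integrableAtFilter_rpow_atTop_iff.2 (by linarith))).mono_set Ioi_subset_Ici_self

lemma isBigO_integral_nhdsGT_zero {δ C m : ℝ} (hδ : 0 < δ) (hm : 0 ≤ m) (hC : 0 ≤ C)
    (h0 : ∀ s ∈ Ioo 0 δ, ‖w s‖ ≤ C * s ^ m) :
    (fun r => ∫ s in (0:ℝ)..r, w s) =O[𝓝[>] 0] fun r => r ^ (m + 1) := by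
  refine IsBigO.of_bound C ?_
  filter_upwards [Ioo_mem_nhdsGT hδ] with r hr
  refine norm_integral_zero_le_of_norm_le_mul_rpow hr.1 fun s hs => ?_
  calc ‖w s‖ ≤ C * s ^ m := h0 s ⟨hs.1, hs.2.trans_lt hr.2⟩
    _ ≤ C * r ^ m := by gcongr; exacts [hs.1.le, hs.2]

lemma isBigO_integral_atTop (hw : ContinuousOn w (Ioi 0)) {δ M R C a : ℝ} (hδ : 0 < δ)
    (h0 : ∀ s ∈ Ioo 0 δ, ‖w s‖ ≤ M) (hC : 0 ≤ C) (ha : 0 ≤ a)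
    (hinf : ∀ s ≥ R, ‖w s‖ ≤ C * s ^ a) :
    (fun r => ∫ s in (0:ℝ)..r, w s) =O[atTop] fun r => r ^ (a + 1) := by
  obtain ⟨M', hM', hM'w⟩ := exists_norm_le_on_Ioc hw hδ h0 R
  refine IsBigO.of_bound (M' + C) ?_
  filter_upwards [eventually_ge_atTop 1] with r hr
  have hra : 1 ≤ r ^ a := Real.one_le_rpow hr ha
  refine norm_integral_zero_le_of_norm_le_mul_rpow (by linarith) fun s hs => ?_
  rcases le_or_gt s R with hsR | hsR
  · nlinarith [hM'w s ⟨hs.1, hsR⟩]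
  · calc ‖w s‖ ≤ C * s ^ a := hinf s hsR.le
      _ ≤ C * r ^ a := by gcongr; exacts [hs.1.le, hs.2]
      _ ≤ (M' + C) * r ^ a := by gcongr; linarith

lemma isBigO_integral_inv_Ioi_atTop {c R a : ℝ} (hc : 0 < c) (ha : 1 < a)
    (hinf : ∀ s ≥ R, c * s ^ a ≤ w s) :
    (fun r => ∫ s in Ioi r, (w s)⁻¹) =O[atTop] fun r => r ^ (1 - a) := by
  refine IsBigO.of_bound (c⁻¹ / (a - 1)) ?_
  filter_upwards [eventually_ge_atTop R, eventually_gt_atTop 0] with r hrR hr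
  rw [Real.norm_of_nonneg (Real.rpow_nonneg hr.le _)]
  exact norm_setIntegral_le_of_norm_le_mul_rpow_neg hr ha (inv_nonneg.2 hc.le) measurableSet_Ioi
    subset_rfl fun s hs => norm_inv_le_inv_mul_rpow_neg hc (hr.trans hs) (hinf s (hrR.trans hs.le))

lemma isBigO_integral_inv_Ioi_nhdsGT_zero
    (hint : ∀ r > 0, IntegrableOn (fun s => (w s)⁻¹) (Ioi r)) {c δ m b : ℝ} (hc : 0 < c)
    (hδ : 0 < δ) (h0 : ∀ s ∈ Ioo 0 δ, c * s ^ m ≤ w s) (hmb : m ≤ b) (hb : 1 < b) :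
    (fun r => ∫ s in Ioi r, (w s)⁻¹) =O[𝓝[>] 0] fun r => r ^ (1 - b) := by
  set t := min (δ / 2) 1
  have ht : 0 < t := lt_min (half_pos hδ) one_pos
  have htδ : t < δ := (min_le_left _ _).trans_lt (half_lt_self hδ)
  set A := c⁻¹ * t ^ (b - m)
  refine IsBigO.of_bound (A / (b - 1) + ‖∫ s in Ioi t, (w s)⁻¹‖) ?_
  filter_upwards [Ioo_mem_nhdsGT ht] with r hr
  have hsplit : ∫ s in Ioi r, (w s)⁻¹ = (∫ s in Ioc r t, (w s)⁻¹) + ∫ s in Ioi t, (w s)⁻¹ := by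
    rw [← setIntegral_union (Ioc_disjoint_Ioi le_rfl) measurableSet_Ioi
      ((hint r hr.1).mono_set Ioc_subset_Ioi_self) (hint t ht), Ioc_union_Ioi_eq_Ioi hr.2.le]
  have hnear : ‖∫ s in Ioc r t, (w s)⁻¹‖ ≤ A / (b - 1) * r ^ (1 - b) := by
    refine norm_setIntegral_le_of_norm_le_mul_rpow_neg hr.1 hb (by positivity) measurableSet_Ioc
      Ioc_subset_Ioi_self fun s hs => ?_
    have hs0 : 0 < s := hr.1.trans hs.1
    calc ‖(w s)⁻¹‖ ≤ c⁻¹ * s ^ (-m) :=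
          norm_inv_le_inv_mul_rpow_neg hc hs0 (h0 s ⟨hs0, hs.2.trans_lt htδ⟩)
      _ = c⁻¹ * s ^ (b - m) * s ^ (-b) := by
          rw [mul_assoc, ← Real.rpow_add hs0]
          ring_nf
      _ ≤ c⁻¹ * t ^ (b - m) * s ^ (-b) := by gcongr; exact hs.2
  have hone : 1 ≤ r ^ (1 - b) :=
    Real.one_le_rpow_of_pos_of_le_one_of_nonpos hr.1 (hr.2.le.trans (min_le_right _ _))
      (by linarith)
  rw [Real.norm_of_nonneg (Real.rpow_nonneg hr.1.le _), hsplit, add_mul]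
  exact (norm_add_le _ _).trans (add_le_add hnear (le_mul_of_one_le_right (norm_nonneg _) hone))

theorem tendsto_muckenhoupt_nhdsGT_zero
    (hint : ∀ r > 0, IntegrableOn (fun s => (w s)⁻¹) (Ioi r)) {c C δ m p : ℝ} (hc : 0 < c)
    (hC : 0 ≤ C) (hδ : 0 < δ) (hm : 1 ≤ m) (hp : 0 < p)
    (h0 : ∀ s ∈ Ioo 0 δ, w s ∈ Icc (c * s ^ m) (C * s ^ m))
    (hgap : (m - 1) / 2 < (m + 1) / p) :
    Tendsto (muckenhoupt w p) (𝓝[>] 0) (𝓝 0) := by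
  set ε := (m + 1) / p - (m - 1) / 2 with hε_def
  have hε : 0 < ε := sub_pos.2 hgap
  have hnorm : ∀ s ∈ Ioo 0 δ, ‖w s‖ ≤ C * s ^ m := fun s hs => by
    have hs0 := hs.1
    rw [Real.norm_of_nonneg ((by positivity : 0 ≤ c * s ^ m).trans (h0 s hs).1)]
    exact (h0 s hs).2
  refine tendsto_rpow_mul_rpow_of_isBigO (by positivity) (by norm_num) self_mem_nhdsWithin
    (isBigO_integral_nhdsGT_zero hδ (by linarith) hC hnorm)
    (isBigO_integral_inv_Ioi_nhdsGT_zero (b := m + ε) hint hc hδ (fun s hs => (h0 s hs).1)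
      (by linarith) (by linarith)) ?_
  convert tendsto_rpow_nhdsGT_zero (half_pos hε) using 3
  rw [hε_def]
  ring

theorem tendsto_muckenhoupt_atTop (hw : ContinuousOn w (Ioi 0)) {c C M δ R a p : ℝ}
    (hc : 0 < c) (hC : 0 ≤ C) (hδ : 0 < δ) (ha : 1 < a) (hp : 0 < p)
    (h0 : ∀ s ∈ Ioo 0 δ, ‖w s‖ ≤ M) (hinf : ∀ s ≥ R, w s ∈ Icc (c * s ^ a) (C * s ^ a))
    (hgap : (a + 1) / p < (a - 1) / 2) :
    Tendsto (muckenhoupt w p) atTop (𝓝 0) := by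
  have hnorm : ∀ s ≥ max R 1, ‖w s‖ ≤ C * s ^ a := fun s hs => by
    have hs0 : 0 < s := one_pos.trans_le ((le_max_right _ _).trans hs)
    have hsR := (le_max_left _ _).trans hs
    rw [Real.norm_of_nonneg ((by positivity : 0 ≤ c * s ^ a).trans (hinf s hsR).1)]
    exact (hinf s hsR).2
  refine tendsto_rpow_mul_rpow_of_isBigO (by positivity) (by norm_num) (eventually_gt_atTop 0)
    (isBigO_integral_atTop hw hδ h0 hC (by linarith) hnorm)
    (isBigO_integral_inv_Ioi_atTop hc ha fun s hs => (hinf s hs).1) ?_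
  refine (tendsto_rpow_neg_atTop (y := (a - 1) / 2 - (a + 1) / p) (by linarith)).congr
    fun r => ?_
  congr 1
  ring

end Weight

/-- Compactness criterion: for a weight `ψ` comparable to `r` near `0` and to `r^α` at
infinity, and `2*_α < p` (with `p < 2n/(n-2)` if `n ≥ 3`), the Muckenhoupt quantity
tends to `0` both as `r → 0⁺` and as `r → ∞`. -/
theorem muckenhoupt_vanishing (n : ℕ) (hn : 2 ≤ n) (α : ℝ) (hα : 1 < α)
    (p : ℝ) (hp : 2 * (α * (n - 1) + 1) / (α * (n - 1) - 1) < p)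
    (hp' : 3 ≤ n → p < 2 * n / ((n : ℝ) - 2))
    (ψ : ℝ → ℝ)
    (hcont : ContinuousOn ψ (Ioi 0))
    (hpos : ∀ r > (0:ℝ), 0 < ψ r)
    (κ₁ κ₂ : ℝ) (hκ₁ : 0 < κ₁) (hκ₂ : 0 < κ₂)
    (δ : ℝ) (hδ : 0 < δ)
    (h0 : ∀ r ∈ Ioo (0:ℝ) δ, κ₁ * r ≤ ψ r ∧ ψ r ≤ κ₂ * r)
    (R : ℝ) (hR : 0 < R)
    (hinf : ∀ r ≥ R, κ₁ * r ^ α ≤ ψ r ∧ ψ r ≤ κ₂ * r ^ α) :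
    Tendsto (fun r => (∫ s in (0:ℝ)..r, ψ s ^ (n - 1)) ^ (1 / p)
        * (∫ s in Ioi r, (ψ s ^ (n - 1))⁻¹) ^ (1 / 2 : ℝ))
      (nhdsWithin 0 (Ioi 0)) (nhds 0) ∧
    Tendsto (fun r => (∫ s in (0:ℝ)..r, ψ s ^ (n - 1)) ^ (1 / p)
        * (∫ s in Ioi r, (ψ s ^ (n - 1))⁻¹) ^ (1 / 2 : ℝ))
      atTop (nhds 0) := by
  have hn' : (2:ℝ) ≤ n := by exact_mod_cast hn
  have hcast : ((n - 1 : ℕ) : ℝ) = n - 1 := by rw [Nat.cast_sub (by omega), Nat.cast_one]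
  set w : ℝ → ℝ := fun s => ψ s ^ (n - 1)
  have hw : ContinuousOn w (Ioi 0) := hcont.pow _
  have hnear : ∀ s ∈ Ioo 0 δ,
      w s ∈ Icc (κ₁ ^ (n - 1) * s ^ ((n:ℝ) - 1)) (κ₂ ^ (n - 1) * s ^ ((n:ℝ) - 1)) :=
    fun s hs => by
      simpa [hcast] using
        pow_mem_Icc_mul_rpow (e := 1) (n - 1) hκ₁.le hs.1.le (by simpa using h0 s hs)
  have hfar : ∀ s ≥ R,
      w s ∈ Icc (κ₁ ^ (n - 1) * s ^ (α * (n - 1))) (κ₂ ^ (n - 1) * s ^ (α * (n - 1))) :=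
    fun s hs => by
      simpa [hcast] using pow_mem_Icc_mul_rpow (n - 1) hκ₁.le (hR.le.trans hs) (hinf s hs)
  have ha : 1 < α * (n - 1) := by nlinarith
  have hp0 : 0 < p := (div_pos (by linarith) (by linarith)).trans hp
  have hbdd : ∀ s ∈ Ioo 0 δ, ‖w s‖ ≤ κ₂ ^ (n - 1) * δ ^ ((n:ℝ) - 1) := fun s hs => by
    rw [Real.norm_of_nonneg (pow_pos (hpos s hs.1) _).le]
    exact (hnear s hs).2.trans (by gcongr; exacts [hs.1.le, by linarith, hs.2.le])
  have hgap₀ : ((n:ℝ) - 1 - 1) / 2 < ((n:ℝ) - 1 + 1) / p := by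
    rcases lt_or_ge n 3 with hn3 | hn3
    · obtain rfl : n = 2 := by omega
      norm_num
      positivity
    · have hn3' : (3:ℝ) ≤ n := by exact_mod_cast hn3
      have h := (lt_div_iff₀ (by linarith)).1 (hp' hn3)
      rw [div_lt_div_iff₀ two_pos hp0]
      nlinarith
  have hgap : (α * (n - 1) + 1) / p < (α * (n - 1) - 1) / 2 := by
    rw [div_lt_iff₀ (by linarith)] at hp
    rw [div_lt_div_iff₀ hp0 two_pos]
    nlinarith
  have hint : ∀ r > 0, IntegrableOn (fun s => (w s)⁻¹) (Ioi r) := fun r hr =>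
    integrableOn_inv_Ioi hw (fun s hs => (pow_pos (hpos s hs) _).ne') (pow_pos hκ₁ _) ha
      (fun s hs => (hfar s hs).1) hr
  exact ⟨tendsto_muckenhoupt_nhdsGT_zero hint (pow_pos hκ₁ _) (pow_nonneg hκ₂.le _) hδ
      (by linarith) hp0 hnear hgap₀,
    tendsto_muckenhoupt_atTop hw (pow_pos hκ₁ _) (pow_nonneg hκ₂.le _) hδ ha hp0 hbdd hfar hgap⟩
end

section
/- Let n ≥ 2, α > 1, q > 2̃_α, and suppose ψ : (0,∞) → (0,∞) is C¹, nondecreasing, with ψ'(r)/ψ(r) ≥ (α-ε)/r for all r ≥ r_ε, where ε > 0 is so small that (α-ε)(n-1)+1 > 2q/(q-1). Then there exist A, B > 0 such that w(r) = A(B + r²)^{-1/(q-1)} satisfies -w''(r) - (n-1)(ψ'(r)/ψ(r)) w'(r) ≥ w(r)^q for all r > 0. -/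
/-!
With `m = 1/(q-1)` and `s = B + r²`, both sides of the inequality for `w = A s^(-m)` carry the
factor `A s^(-m-2)`, which reduces it to
`A^(q-1) s ≤ 2m (s - 2(m+1) r² + (n-1) (r ψ'/ψ) s)`.
For `r ≥ r_ε` the bound `r ψ'/ψ ≥ α - ε` and `r² ≤ s` make the right side at least
`2m ((n-1)(α-ε) + 1 - 2(m+1)) s`, a positive multiple of `s` by the choice of `ε`
(note `2q/(q-1) = 2(m+1)`). For `r < r_ε` the `ψ`-term is nonnegative since `ψ` is nondecreasing,
and `B = 4(m+1) r_ε²` makes the right side at least `m s`. So `A^(q-1)` = the smaller of the two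
constants works.
-/

open Set

section RadialProfile

variable {A B m : ℝ}

lemma hasDerivAt_profile (hB : 0 < B) (t : ℝ) :
    HasDerivAt (fun t => A * (B + t ^ 2) ^ (-m))
      (-2 * A * m * (t * (B + t ^ 2) ^ (-m - 1))) t := by
  have hs : HasDerivAt (fun t : ℝ => B + t ^ 2) (2 * t) t := by
    simpa using (hasDerivAt_pow 2 t).const_add B
  refine ((hs.rpow_const (p := -m) (Or.inl (by positivity))).const_mul A).congr_deriv ?_
  ring

lemma deriv_profile (hB : 0 < B) :
    deriv (fun t => A * (B + t ^ 2) ^ (-m)) = fun t => -2 * A * m * (t * (B + t ^ 2) ^ (-m - 1)) :=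
  funext fun t => (hasDerivAt_profile hB t).deriv

lemma hasDerivAt_deriv_profile (hB : 0 < B) (t : ℝ) :
    HasDerivAt (fun t => -2 * A * m * (t * (B + t ^ 2) ^ (-m - 1)))
      (-2 * A * m * ((B + t ^ 2) ^ (-m - 1) - 2 * (m + 1) * t ^ 2 * (B + t ^ 2) ^ (-m - 2))) t := by
  have hs : HasDerivAt (fun t : ℝ => B + t ^ 2) (2 * t) t := by
    simpa using (hasDerivAt_pow 2 t).const_add B
  refine (((hasDerivAt_id' t).mul
    (hs.rpow_const (p := -m - 1) (Or.inl (by positivity)))).const_mul (-2 * A * m)).congr_deriv ?_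
  rw [show -m - 1 - 1 = -m - 2 by ring]
  ring

lemma neg_deriv_deriv_profile_sub (hB : 0 < B) (k L t : ℝ) :
    -deriv (deriv fun t => A * (B + t ^ 2) ^ (-m)) t
        - k * L * deriv (fun t => A * (B + t ^ 2) ^ (-m)) t
      = A * (B + t ^ 2) ^ (-m - 2) *
          (2 * m * ((B + t ^ 2) - 2 * (m + 1) * t ^ 2 + k * (L * t) * (B + t ^ 2))) := by
  have hsplit : (B + t ^ 2) ^ (-m - 1) = (B + t ^ 2) ^ (-m - 2) * (B + t ^ 2) := by
    rw [← Real.rpow_add_one (by positivity)]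
    ring_nf
  simp only [deriv_profile hB, (hasDerivAt_deriv_profile hB t).deriv, hsplit]
  ring

lemma profile_rpow (hA : 0 < A) (hB : 0 < B) {q : ℝ} (hq : 1 < q) (t : ℝ) :
    (A * (B + t ^ 2) ^ (-(1 / (q - 1)))) ^ q
      = A * (B + t ^ 2) ^ (-(1 / (q - 1)) - 2) * (A ^ (q - 1) * (B + t ^ 2)) := by
  have hs : 0 < B + t ^ 2 := by positivity
  have : q - 1 ≠ 0 := by linarith
  have hAq : A ^ q = A * A ^ (q - 1) := by
    rw [mul_comm, ← Real.rpow_add_one hA.ne']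
    ring_nf
  have hsq : (B + t ^ 2) ^ (-(1 / (q - 1)) * q)
      = (B + t ^ 2) ^ (-(1 / (q - 1)) - 2) * (B + t ^ 2) := by
    rw [← Real.rpow_add_one hs.ne']
    congr 1
    field_simp
    ring
  rw [Real.mul_rpow hA.le (by positivity), ← Real.rpow_mul hs.le, hAq, hsq]
  ring

lemma profile_supersolution_of_le (hA : 0 < A) (hB : 0 < B) {q : ℝ} (hq : 1 < q)
    {k L t : ℝ}
    (h : A ^ (q - 1) * (B + t ^ 2) ≤ 2 * (1 / (q - 1)) *
      ((B + t ^ 2) - 2 * (1 / (q - 1) + 1) * t ^ 2 + k * (L * t) * (B + t ^ 2))) :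
    (A * (B + t ^ 2) ^ (-(1 / (q - 1)))) ^ q ≤
      -deriv (deriv fun t => A * (B + t ^ 2) ^ (-(1 / (q - 1)))) t
        - k * L * deriv (fun t => A * (B + t ^ 2) ^ (-(1 / (q - 1)))) t := by
  rw [profile_rpow hA hB hq, neg_deriv_deriv_profile_sub hB]
  exact mul_le_mul_of_nonneg_left h (by positivity)

end RadialProfile

section Coefficient

variable {m k ℓ c B r : ℝ}

lemma coeff_bound_of_slope_ge {a : ℝ} (hm : 0 < m) (hk : 0 ≤ k) (hB : 0 ≤ B) (ha : a ≤ ℓ)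
    (hc : c ≤ 2 * m * (k * a + 1 - 2 * (m + 1))) :
    c * (B + r ^ 2) ≤ 2 * m * ((B + r ^ 2) - 2 * (m + 1) * r ^ 2 + k * ℓ * (B + r ^ 2)) := by
  have hs : 0 ≤ B + r ^ 2 := by positivity
  calc c * (B + r ^ 2) ≤ 2 * m * (k * a + 1 - 2 * (m + 1)) * (B + r ^ 2) :=
        mul_le_mul_of_nonneg_right hc hs
    _ = 2 * m * ((B + r ^ 2) - 2 * (m + 1) * (B + r ^ 2) + k * a * (B + r ^ 2)) := by ring
    _ ≤ 2 * m * ((B + r ^ 2) - 2 * (m + 1) * r ^ 2 + k * ℓ * (B + r ^ 2)) := by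
        gcongr 2 * m * (_ - 2 * (m + 1) * ?_ + k * ?_ * _)
        linarith [sq_nonneg r]

lemma coeff_bound_of_sq_le (hm : 0 < m) (hkℓ : 0 ≤ k * ℓ) (hB : 4 * (m + 1) * r ^ 2 ≤ B)
    (hc : c ≤ m) :
    c * (B + r ^ 2) ≤ 2 * m * ((B + r ^ 2) - 2 * (m + 1) * r ^ 2 + k * ℓ * (B + r ^ 2)) := by
  have hs : 0 ≤ B + r ^ 2 := by nlinarith [sq_nonneg r]
  have : 0 ≤ k * ℓ * (B + r ^ 2) := mul_nonneg hkℓ hs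
  have : 2 * (m + 1) * r ^ 2 ≤ (B + r ^ 2) / 2 := by nlinarith [sq_nonneg r]
  nlinarith [mul_le_mul_of_nonneg_right hc hs]

end Coefficient

theorem supersolution_exists_general (n : ℕ) (hn : 2 ≤ n) (α : ℝ) (hα : 1 < α)
    (q : ℝ) (hq : (α * (n - 1) + 1) / (α * (n - 1) - 1) < q)
    (ψ : ℝ → ℝ)
    (hpos : ∀ r > (0:ℝ), 0 < ψ r)
    (hmono : MonotoneOn ψ (Ioi 0))
    (ε rε : ℝ) (hrε : 0 < rε)
    (hεsmall : 2 * q / (q - 1) < (α - ε) * (n - 1) + 1)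
    (hlower : ∀ r ≥ rε, (α - ε) / r ≤ deriv ψ r / ψ r) :
    ∃ A > (0:ℝ), ∃ B > (0:ℝ),
      ∀ r > (0:ℝ),
        (fun w : ℝ → ℝ =>
          w r ^ q ≤ -deriv (deriv w) r - (n - 1 : ℝ) * (deriv ψ r / ψ r) * deriv w r)
        (fun r => A * (B + r ^ 2) ^ (-(1 / (q - 1)))) := by
  have hk : (1 : ℝ) ≤ n - 1 := by
    have : (2 : ℝ) ≤ n := by exact_mod_cast hn
    linarith
  have hq1 : 1 < q := by
    have hX : 0 < α * (n - 1) - 1 := by nlinarith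
    exact ((one_lt_div hX).2 (by linarith)).trans hq
  set m := 1 / (q - 1) with hm
  have hm0 : 0 < m := one_div_pos.2 (by linarith)
  have hgap : 0 < 2 * m * ((n - 1) * (α - ε) + 1 - 2 * (m + 1)) := by
    have : 2 * q / (q - 1) = 2 * (m + 1) := by
      rw [hm]
      field_simp [show q - 1 ≠ 0 by linarith]
      ring
    have : 0 < (n - 1) * (α - ε) + 1 - 2 * (m + 1) := by linarith
    positivity
  set c := min (2 * m * ((n - 1) * (α - ε) + 1 - 2 * (m + 1))) m
  have hc : 0 < c := lt_min hgap hm0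
  refine ⟨c ^ m, Real.rpow_pos_of_pos hc m, 4 * (m + 1) * rε ^ 2, by positivity,
    fun r hr => ?_⟩
  beta_reduce
  apply profile_supersolution_of_le (Real.rpow_pos_of_pos hc m) (by positivity) hq1
  rw [← Real.rpow_mul hc.le, hm, one_div_mul_cancel (by linarith), Real.rpow_one]
  have hψ' : 0 ≤ deriv ψ r := by
    rw [← derivWithin_of_isOpen isOpen_Ioi (mem_Ioi.2 hr)]
    exact hmono.derivWithin_nonneg
  have hL : 0 ≤ deriv ψ r / ψ r := div_nonneg hψ' (hpos r hr).le
  rcases le_or_gt rε r with hout | hin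
  · exact coeff_bound_of_slope_ge hm0 (by linarith) (by positivity)
      ((div_le_iff₀ hr).1 (hlower r hout)) (min_le_left _ _)
  · exact coeff_bound_of_sq_le hm0 (mul_nonneg (by linarith) (mul_nonneg hL hr.le))
      (by gcongr) (min_le_right _ _)

/-- Existence of radial supersolutions for `q > 2̃_α` (core computation of Theorem 1.3):
if `ψ` is `C¹`, nondecreasing, with `ψ'/ψ ≥ (α-ε)/r` for `r ≥ r_ε`, and `ε` is small
enough that `(α-ε)(n-1)+1 > 2q/(q-1)`, then some `w(r) = A(B+r²)^{-1/(q-1)}` satisfies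
`-w'' - (n-1)(ψ'/ψ) w' ≥ w^q` on `(0,∞)`. -/
theorem supersolution_exists (n : ℕ) (hn : 2 ≤ n) (α : ℝ) (hα : 1 < α)
    (q : ℝ) (hq : (α * (n - 1) + 1) / (α * (n - 1) - 1) < q)
    (ψ : ℝ → ℝ)
    (hpos : ∀ r > (0:ℝ), 0 < ψ r)
    (hdiff : ∀ r > (0:ℝ), DifferentiableAt ℝ ψ r)
    (hmono : MonotoneOn ψ (Ioi 0))
    (ε rε : ℝ) (hε : 0 < ε) (hrε : 0 < rε)
    (hεsmall : 2 * q / (q - 1) < (α - ε) * (n - 1) + 1)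
    (hlower : ∀ r ≥ rε, (α - ε) / r ≤ deriv ψ r / ψ r) :
    ∃ A > (0:ℝ), ∃ B > (0:ℝ),
      ∀ r > (0:ℝ),
        (fun w : ℝ → ℝ =>
          w r ^ q ≤ -deriv (deriv w) r - (n - 1 : ℝ) * (deriv ψ r / ψ r) * deriv w r)
        (fun r => A * (B + r ^ 2) ^ (-(1 / (q - 1)))) :=
  supersolution_exists_general n hn α hα q hq ψ hpos hmono ε rε hrε hεsmall hlower
end

section
/- Let n ≥ 2, q > 1, ψ as above, and u a positive C² solution of -(ψ^{n-1}u')' = ψ^{n-1}u^q on (0,∞) with u'(0)=0. Define P_u(r) = (∫₀^r ψ^{n-1} ds)·[ (1/2)|u'(r)|² + u(r)^{q+1}/(q+1) ] + (ψ^{n-1}(r)/(q+1)) u(r) u'(r). Then P_u'(r) = ψ^{n-1}(r) [ 1/2 + 1/(q+1) - (n-1)(ψ'(r)/ψ^n(r)) ∫₀^r ψ^{n-1} ds ] |u'(r)|² for all r > 0. -/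
/-!
For the energy `E = ½ u'² + u^{q+1}/(q+1)`, the equation `(w u')' = -w u^q` gives
`E' = u'(u'' + u^q) = -(w'/w) u'²`, and `(w u u')' = w u'² + u (w u')' = w u'² - w u^{q+1}`.
In `P' = w E + V E' + (w u u')'/(q+1)` the terms in `u^{q+1}` therefore cancel, leaving
`(w (½ + 1/(q+1)) - V w'/w) u'²`; for `w = ψ^{n-1}` one has `w'/w = (n-1) ψ'/ψ`.
-/

open Set Filter intervalIntegral

theorem hasDerivAt_integral_of_continuousOn_Ici {f : ℝ → ℝ} {a r : ℝ}
    (hf : ContinuousOn f (Ici a)) (hr : a < r) :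
    HasDerivAt (fun t => ∫ s in a..t, f s) (f r) r :=
  integral_hasDerivAt_right
    ((hf.mono (uIcc_of_le hr.le ▸ Icc_subset_Ici_self)).intervalIntegrable)
    ⟨Ici a, Ici_mem_nhds hr, hf.aestronglyMeasurable measurableSet_Ici⟩
    (hf.continuousAt (Ici_mem_nhds hr))

/-- The paper's `P_u` for the weight `w`, with `V` standing for `∫₀^· w` and `v` for `u'`. -/
noncomputable def pohozaevFunction (V w u v : ℝ → ℝ) (q : ℝ) (t : ℝ) : ℝ :=
  V t * (1 / 2 * v t ^ 2 + u t ^ (q + 1) / (q + 1)) + w t / (q + 1) * u t * v t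

section

variable {V w u v : ℝ → ℝ} {q r w' a : ℝ}

theorem hasDerivAt_energy (hu : HasDerivAt u (v r) r) (hv : HasDerivAt v a r)
    (hur : 0 < u r) (hq : q + 1 ≠ 0) :
    HasDerivAt (fun t => 1 / 2 * v t ^ 2 + u t ^ (q + 1) / (q + 1)) (v r * (a + u r ^ q)) r := by
  refine (((hv.pow 2).const_mul (1 / 2)).add
    ((hu.rpow_const (Or.inl hur.ne')).div_const (q + 1))).congr_deriv ?_
  rw [add_sub_cancel_right]
  field_simp
  ring

theorem hasDerivAt_pohozaevFunction (hV : HasDerivAt V (w r) r) (hw : HasDerivAt w w' r)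
    (hu : HasDerivAt u (v r) r) (hv : HasDerivAt v a r)
    (heq : HasDerivAt (fun t => w t * v t) (-(w r * u r ^ q)) r)
    (hwr : w r ≠ 0) (hur : 0 < u r) (hq : q + 1 ≠ 0) :
    HasDerivAt (pohozaevFunction V w u v q)
      ((w r * (1 / 2 + 1 / (q + 1)) - V r * (w' / w r)) * v r ^ 2) r := by
  have hflux : w' * v r + w r * a = -(w r * u r ^ q) := (hw.mul hv).unique heq
  have hupow : u r ^ (q + 1) = u r ^ q * u r := Real.rpow_add_one hur.ne' q
  refine ((hV.mul (hasDerivAt_energy hu hv hur hq)).add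
    (((hw.div_const (q + 1)).mul hu).mul hv)).congr_deriv ?_
  have ha : a = (-(w r * u r ^ q) - w' * v r) / w r := by
    field_simp
    linarith
  rw [hupow, ha]
  simp only [Pi.mul_apply]
  field_simp
  ring

end

theorem pohozaev_derivative_formula_general (n : ℕ) (hn : 2 ≤ n) (q : ℝ) (hq : 1 < q)
    (ψ : ℝ → ℝ)
    (hψcont : ContinuousOn ψ (Ici 0))
    (hψC1 : ContDiffOn ℝ 1 ψ (Ioi 0))
    (hψpos : ∀ r > (0:ℝ), 0 < ψ r)
    (u : ℝ → ℝ) (hu : ContDiff ℝ 2 u)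
    (hupos : ∀ r : ℝ, 0 ≤ r → 0 < u r)
    (heq : ∀ r > (0:ℝ),
      -deriv (fun s => ψ s ^ (n - 1) * deriv u s) r = ψ r ^ (n - 1) * u r ^ q) :
    ∀ r > (0:ℝ),
      deriv (fun t => (∫ s in (0:ℝ)..t, ψ s ^ (n - 1)) *
            ((1 / 2) * (deriv u t) ^ 2 + u t ^ (q + 1) / (q + 1))
          + ψ t ^ (n - 1) / (q + 1) * u t * deriv u t) r
        = ψ r ^ (n - 1) *
            (1 / 2 + 1 / (q + 1)
              - (n - 1 : ℝ) * (deriv ψ r / ψ r ^ n) * ∫ s in (0:ℝ)..r, ψ s ^ (n - 1))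
            * (deriv u r) ^ 2 := by
  intro r hr
  have hψr : 0 < ψ r := hψpos r hr
  have hψ : HasDerivAt ψ (deriv ψ r) r :=
    ((hψC1.contDiffAt (Ioi_mem_nhds hr)).differentiableAt one_ne_zero).hasDerivAt
  have hu'' : HasDerivAt (deriv u) (deriv (deriv u) r) r :=
    ((hu.iterate_deriv' 1 1).differentiable one_ne_zero r).hasDerivAt
  have hflux : HasDerivAt (fun s => ψ s ^ (n - 1) * deriv u s) (-(ψ r ^ (n - 1) * u r ^ q)) r := by
    rw [← heq r hr, neg_neg]
    exact ((hψ.pow (n - 1)).mul hu'').differentiableAt.hasDerivAt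
  refine (hasDerivAt_pohozaevFunction (V := fun t => ∫ s in (0:ℝ)..t, ψ s ^ (n - 1))
    (w := fun s => ψ s ^ (n - 1))
    (hasDerivAt_integral_of_continuousOn_Ici (hψcont.pow _) hr) (hψ.pow (n - 1))
    (hu.differentiable two_ne_zero r).hasDerivAt hu'' hflux (pow_pos hψr _).ne' (hupos r hr.le)
    (by linarith)).deriv.trans ?_
  obtain ⟨m, rfl⟩ : ∃ m, n = m + 2 := ⟨n - 2, by omega⟩
  simp only [pow_succ]
  field_simp
  push_cast
  ring

/-- Derivative formula (4.2) for the Pohozaev function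
`P_u(r) = (∫₀^r ψ^{n-1})·[½|u'|² + u^{q+1}/(q+1)] + (ψ^{n-1}/(q+1)) u u'`:
`P_u'(r) = ψ^{n-1}(r)[½ + 1/(q+1) - (n-1)(ψ'/ψ^n)∫₀^r ψ^{n-1}] |u'(r)|²`. -/
theorem pohozaev_derivative_formula (n : ℕ) (hn : 2 ≤ n) (q : ℝ) (hq : 1 < q)
    (ψ : ℝ → ℝ)
    (hψcont : ContinuousOn ψ (Ici 0))
    (hψC1 : ContDiffOn ℝ 1 ψ (Ioi 0))
    (hψpos : ∀ r > (0:ℝ), 0 < ψ r)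
    (hψ0 : Tendsto (fun r => ψ r / r) (nhdsWithin 0 (Ioi 0)) (nhds 1))
    (u : ℝ → ℝ) (hu : ContDiff ℝ 2 u)
    (hupos : ∀ r : ℝ, 0 ≤ r → 0 < u r)
    (hu'0 : deriv u 0 = 0)
    (heq : ∀ r > (0:ℝ),
      -deriv (fun s => ψ s ^ (n - 1) * deriv u s) r = ψ r ^ (n - 1) * u r ^ q) :
    ∀ r > (0:ℝ),
      deriv (fun t => (∫ s in (0:ℝ)..t, ψ s ^ (n - 1)) *
            ((1 / 2) * (deriv u t) ^ 2 + u t ^ (q + 1) / (q + 1))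
          + ψ t ^ (n - 1) / (q + 1) * u t * deriv u t) r
        = ψ r ^ (n - 1) *
            (1 / 2 + 1 / (q + 1)
              - (n - 1 : ℝ) * (deriv ψ r / ψ r ^ n) * ∫ s in (0:ℝ)..r, ψ s ^ (n - 1))
            * (deriv u r) ^ 2 :=
  pohozaev_derivative_formula_general n hn q hq ψ hψcont hψC1 hψpos u hu hupos heq
end

section
/- Let n ≥ 2, α > 1, q > 2̃_α, and suppose ψ is a model function with κ₁ r^α ≤ ψ(r) ≤ κ₂ r^α for r large, ψ(r) ∼ r near 0. If u is a global positive C² solution of -(ψ^{n-1}u')' = ψ^{n-1}u^q on (0,∞) with u'(0)=0, then there exists C > 0 such that u(r) ≤ C(r+1)^{-2/(q-1)} for all r ≥ 0. -/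
/-!
Let `v = ψ^(n-1) u'` be the flux. Since `v 0 = 0` and `v' = -ψ^(n-1) u^q ≤ 0`, `u` is
nonincreasing. Comparing `v'` with `κ₁^(n-1) s^β u(r)^q` on `[ρ, r]`, `ρ ≥ R`, where
`β = α (n-1)`, gives `-v(r) ≳ u(r)^q r^(β+1)`, and the upper bound `ψ^(n-1) ≤ κ₂^(n-1) r^β`
turns this into `-u' ≥ c r u^q` for large `r`. Hence `(u^(1-q))' ≥ (q-1) c r`, so `u^(1-q)`
grows like `r²`, which is the decay `u ≲ r^(-2/(q-1))`; on a bounded interval `u ≤ u 0`.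
-/

open Set Filter

lemma sub_le_sub_of_hasDerivAt_le {f g f' g' : ℝ → ℝ} {a b : ℝ} (hab : a ≤ b)
    (hf : ∀ x ∈ Icc a b, HasDerivAt f (f' x) x) (hg : ∀ x ∈ Icc a b, HasDerivAt g (g' x) x)
    (hle : ∀ x ∈ Icc a b, g' x ≤ f' x) : g b - g a ≤ f b - f a := by
  have hmono : MonotoneOn (fun x => f x - g x) (Icc a b) :=
    monotoneOn_of_hasDerivWithinAt_nonneg (convex_Icc a b)
      (fun x hx => ((hf x hx).sub (hg x hx)).continuousAt.continuousWithinAt)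
      (fun x hx => ((hf x (interior_subset hx)).sub (hg x (interior_subset hx))).hasDerivWithinAt)
      (fun x hx => sub_nonneg.2 (hle x (interior_subset hx)))
  linarith [hmono (left_mem_Icc.2 hab) (right_mem_Icc.2 hab) hab]

lemma rpow_le_rpow_div_two {ρ r γ : ℝ} (hρ : 0 ≤ ρ) (hr : 2 * ρ ≤ r) (hγ : 1 ≤ γ) :
    ρ ^ γ ≤ r ^ γ / 2 :=
  calc ρ ^ γ ≤ (r / 2) ^ γ := Real.rpow_le_rpow hρ (by linarith) (by linarith)
    _ = r ^ γ / 2 ^ γ := Real.div_rpow (by linarith) zero_le_two γ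
    _ ≤ r ^ γ / 2 := div_le_div_of_nonneg_left (Real.rpow_nonneg (by linarith) γ) two_pos
        (Real.self_le_rpow_of_one_le one_le_two hγ)

lemma pow_mem_rpow_bounds {x k₁ k₂ s α : ℝ} (hs : 0 ≤ s) (hk₁ : 0 ≤ k₁)
    (hx : k₁ * s ^ α ≤ x ∧ x ≤ k₂ * s ^ α) (m : ℕ) :
    k₁ ^ m * s ^ (α * m) ≤ x ^ m ∧ x ^ m ≤ k₂ ^ m * s ^ (α * m) := by
  have hlow : 0 ≤ k₁ * s ^ α := mul_nonneg hk₁ (Real.rpow_nonneg hs α)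
  rw [Real.rpow_mul_natCast hs, ← mul_pow, ← mul_pow]
  exact ⟨pow_le_pow_left₀ hlow hx.1 m, pow_le_pow_left₀ (hlow.trans hx.1) hx.2 m⟩

lemma nonpos_of_hasDerivAt_flux {w u' f : ℝ → ℝ} (hw : ContinuousOn w (Ici 0))
    (hwpos : ∀ r > 0, 0 < w r) (hu' : Continuous u') (hu'0 : u' 0 = 0) (hf : ∀ r > 0, 0 ≤ f r)
    (hflux : ∀ r > 0, HasDerivAt (fun s => w s * u' s) (-f r) r) {r : ℝ} (hr : 0 < r) :
    u' r ≤ 0 := by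
  have hanti : AntitoneOn (fun s => w s * u' s) (Ici 0) :=
    antitoneOn_of_hasDerivWithinAt_nonpos (convex_Ici 0) (hw.mul hu'.continuousOn)
      (fun x hx => (hflux x (by simpa using hx)).hasDerivWithinAt)
      (fun x hx => neg_nonpos.2 (hf x (by simpa using hx)))
  have hflux_r : w r * u' r ≤ w 0 * u' 0 := hanti self_mem_Ici hr.le hr.le
  rw [hu'0, mul_zero, mul_comm] at hflux_r
  exact nonpos_of_mul_nonpos_left hflux_r (hwpos r hr)

lemma rpow_mul_le_neg_flux {w u v : ℝ → ℝ} {q β k ρ r : ℝ} (hρ : 0 < ρ) (hρr : ρ ≤ r)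
    (hβ : β ≠ -1) (hk : 0 ≤ k) (hq : 0 ≤ q) (hw : ∀ s ≥ ρ, k * s ^ β ≤ w s)
    (hu : AntitoneOn u (Icc ρ r)) (hur : 0 ≤ u r)
    (hv : ∀ s ≥ ρ, HasDerivAt v (-(w s * u s ^ q)) s) (hvρ : v ρ ≤ 0) :
    k * u r ^ q * ((r ^ (β + 1) - ρ ^ (β + 1)) / (β + 1)) ≤ -v r := by
  have hβ1 : β + 1 ≠ 0 := by contrapose! hβ; linarith
  have hcmp := sub_le_sub_of_hasDerivAt_le (f := fun s => -v s) (f' := fun s => w s * u s ^ q)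
    (g := fun s => k * u r ^ q * (s ^ (β + 1) / (β + 1))) (g' := fun s => k * u r ^ q * s ^ β) hρr
    (fun s hs => (hv s hs.1).neg.congr_deriv (neg_neg _))
    (fun s hs => (((Real.hasDerivAt_rpow_const (Or.inl (hρ.trans_le hs.1).ne')).div_const
      (β + 1)).const_mul (k * u r ^ q)).congr_deriv
        (by rw [add_sub_cancel_right, mul_div_cancel_left₀ _ hβ1]))
    (fun s hs => by
      have hs0 : 0 ≤ s := hρ.le.trans hs.1
      have hws : 0 ≤ w s := (mul_nonneg hk (Real.rpow_nonneg hs0 β)).trans (hw s hs.1)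
      calc k * u r ^ q * s ^ β = k * s ^ β * u r ^ q := by ring
        _ ≤ w s * u r ^ q := mul_le_mul_of_nonneg_right (hw s hs.1) (Real.rpow_nonneg hur q)
        _ ≤ w s * u s ^ q := mul_le_mul_of_nonneg_left (Real.rpow_le_rpow hur
            (hu ⟨hs.1, hs.2⟩ ⟨hρr, le_rfl⟩ hs.2) hq) hws)
  have hsplit : k * u r ^ q * ((r ^ (β + 1) - ρ ^ (β + 1)) / (β + 1))
      = k * u r ^ q * (r ^ (β + 1) / (β + 1)) - k * u r ^ q * (ρ ^ (β + 1) / (β + 1)) := by ring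
  linarith

lemma mul_rpow_le_neg_deriv {w u u' : ℝ → ℝ} {q β k₁ k₂ ρ r : ℝ} (hρ : 0 < ρ) (hr : 2 * ρ ≤ r)
    (hβ : 0 ≤ β) (hk₁ : 0 ≤ k₁) (hk₂ : 0 < k₂) (hq : 0 ≤ q)
    (hw : ∀ s ≥ ρ, k₁ * s ^ β ≤ w s ∧ w s ≤ k₂ * s ^ β) (hu : AntitoneOn u (Ici ρ))
    (hur : 0 ≤ u r) (hu' : ∀ s ≥ ρ, u' s ≤ 0)
    (hflux : ∀ s ≥ ρ, HasDerivAt (fun s => w s * u' s) (-(w s * u s ^ q)) s) :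
    k₁ / (2 * (β + 1) * k₂) * r * u r ^ q ≤ -u' r := by
  have hρr : ρ ≤ r := by linarith
  have hr0 : 0 < r := hρ.trans_le hρr
  have hwρ : 0 ≤ w ρ := (mul_nonneg hk₁ (Real.rpow_nonneg hρ.le β)).trans (hw ρ le_rfl).1
  have hlow := rpow_mul_le_neg_flux hρ hρr (by linarith) hk₁ hq (fun s hs => (hw s hs).1)
    (hu.mono Icc_subset_Ici_self) hur hflux (mul_nonpos_of_nonneg_of_nonpos hwρ (hu' ρ le_rfl))
  have hup : w r * -u' r ≤ k₂ * r ^ β * -u' r :=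
    mul_le_mul_of_nonneg_right (hw r hρr).2 (neg_nonneg.2 (hu' r hρr))
  have hhalf : ρ ^ (β + 1) ≤ r ^ (β + 1) / 2 := rpow_le_rpow_div_two hρ.le hr (by linarith)
  have hsplit : r ^ (β + 1) = r ^ β * r := by rw [Real.rpow_add hr0, Real.rpow_one]
  have hrβ : 0 < r ^ β := Real.rpow_pos_of_pos hr0 β
  have hurq : 0 ≤ u r ^ q := Real.rpow_nonneg hur q
  rw [div_mul_eq_mul_div, div_mul_eq_mul_div, div_le_iff₀ (by positivity)]
  refine le_of_mul_le_mul_left ?_ hrβ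
  rw [hsplit] at hlow hhalf
  rw [mul_div_assoc', div_le_iff₀ (by linarith)] at hlow
  nlinarith [mul_le_mul_of_nonneg_left hhalf (mul_nonneg hk₁ hurq),
    mul_le_mul_of_nonneg_right hup (by linarith : 0 ≤ β + 1)]

lemma sub_sq_le_rpow_one_sub_sub {u u' : ℝ → ℝ} {q c a r : ℝ} (hq : 1 < q) (har : a ≤ r)
    (hu : ∀ s ≥ a, HasDerivAt u (u' s) s) (hpos : ∀ s ≥ a, 0 < u s)
    (hode : ∀ s ≥ a, c * s * u s ^ q ≤ -u' s) :
    (q - 1) * c * ((r ^ 2 - a ^ 2) / 2) ≤ u r ^ (1 - q) - u a ^ (1 - q) := by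
  have hcmp := sub_le_sub_of_hasDerivAt_le (f := fun s => u s ^ (1 - q))
    (f' := fun s => (q - 1) * (-u' s * u s ^ (-q)))
    (g := fun s => (q - 1) * c * (s ^ 2 / 2)) (g' := fun s => (q - 1) * (c * s)) har
    (fun s hs => ((hu s hs.1).rpow_const (Or.inl (hpos s hs.1).ne')).congr_deriv
      (by rw [show 1 - q - 1 = -q by ring]; ring))
    (fun s _ => (((hasDerivAt_pow 2 s).div_const 2).const_mul ((q - 1) * c)).congr_deriv
      (by push_cast; ring))
    (fun s hs => by
      have hus := hpos s hs.1
      have hinv : u s ^ q * u s ^ (-q) = 1 := by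
        rw [← Real.rpow_add hus, add_neg_cancel, Real.rpow_zero]
      have h := mul_le_mul_of_nonneg_right (hode s hs.1) (Real.rpow_nonneg hus.le (-q))
      refine mul_le_mul_of_nonneg_left ?_ (by linarith)
      calc c * s = c * s * u s ^ q * u s ^ (-q) := by rw [mul_assoc _ (u s ^ q), hinv, mul_one]
        _ ≤ -u' s * u s ^ (-q) := h)
  linarith

lemma mul_sq_le_rpow_one_sub {u u' : ℝ → ℝ} {q c a r : ℝ} (hq : 1 < q) (hc : 0 ≤ c) (ha : 1 ≤ a)
    (hr : 2 * a ≤ r) (hu : ∀ s ≥ a, HasDerivAt u (u' s) s) (hpos : ∀ s ≥ a, 0 < u s)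
    (hode : ∀ s ≥ a, c * s * u s ^ q ≤ -u' s) :
    (q - 1) * c / 6 * (r + 1) ^ 2 ≤ u r ^ (1 - q) := by
  have h := sub_sq_le_rpow_one_sub_sub hq (by linarith) hu hpos hode
  have hua : 0 ≤ u a ^ (1 - q) := Real.rpow_nonneg (hpos a le_rfl).le _
  have hsq : (r + 1) ^ 2 / 6 ≤ (r ^ 2 - a ^ 2) / 2 := by nlinarith
  nlinarith [mul_le_mul_of_nonneg_left hsq (mul_nonneg (sub_nonneg.2 hq.le) hc)]

lemma le_rpow_of_mul_sq_le_rpow_one_sub {x y c q : ℝ} (hq : 1 < q) (hx : 0 < x) (hy : 0 < y)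
    (hc : 0 < c) (h : c * y ^ 2 ≤ x ^ (1 - q)) :
    x ≤ c ^ (-(1 / (q - 1))) * y ^ (-(2 / (q - 1))) := by
  have hexp : (1 - q) * -(1 / (q - 1)) = 1 := by field_simp [(sub_pos.2 hq).ne']; ring
  calc x = (x ^ (1 - q)) ^ (-(1 / (q - 1))) := by
        rw [← Real.rpow_mul hx.le, hexp, Real.rpow_one]
    _ ≤ (c * y ^ 2) ^ (-(1 / (q - 1))) :=
        Real.rpow_le_rpow_of_nonpos (by positivity) h
          (neg_nonpos.2 (one_div_nonneg.2 (sub_nonneg.2 hq.le)))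
    _ = c ^ (-(1 / (q - 1))) * y ^ (-(2 / (q - 1))) := by
        rw [Real.mul_rpow hc.le (by positivity), ← Real.rpow_natCast, ← Real.rpow_mul hy.le]
        ring_nf

lemma exists_rpow_bound_of_antitoneOn {u : ℝ → ℝ} {p C ρ : ℝ} (hp : 0 ≤ p) (hC : 0 < C)
    (hu : AntitoneOn u (Ici 0)) (hbig : ∀ r ≥ ρ, u r ≤ C * (r + 1) ^ (-p)) :
    ∃ C > 0, ∀ r ≥ 0, u r ≤ C * (r + 1) ^ (-p) := by
  refine ⟨max C (|u 0| * (ρ + 1) ^ p), lt_max_of_lt_left hC, fun r hr => ?_⟩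
  have hr1 : 0 ≤ (r + 1) ^ (-p) := Real.rpow_nonneg (by linarith) _
  rcases le_or_gt ρ r with hρr | hrρ
  · exact (hbig r hρr).trans (mul_le_mul_of_nonneg_right (le_max_left _ _) hr1)
  · have hinv : (ρ + 1) ^ p * (ρ + 1) ^ (-p) = 1 := by
      rw [← Real.rpow_add (by linarith), add_neg_cancel, Real.rpow_zero]
    calc u r ≤ |u 0| * ((ρ + 1) ^ p * (ρ + 1) ^ (-p)) := by
          rw [hinv, mul_one]; exact (hu self_mem_Ici hr hr).trans (le_abs_self _)
      _ ≤ |u 0| * ((ρ + 1) ^ p * (r + 1) ^ (-p)) := by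
          refine mul_le_mul_of_nonneg_left (mul_le_mul_of_nonneg_left ?_
            (Real.rpow_nonneg (by linarith) p)) (abs_nonneg _)
          exact Real.rpow_le_rpow_of_nonpos (by linarith) (by linarith) (neg_nonpos.2 hp)
      _ ≤ max C (|u 0| * (ρ + 1) ^ p) * (r + 1) ^ (-p) := by
          rw [← mul_assoc]; exact mul_le_mul_of_nonneg_right (le_max_right _ _) hr1

theorem solution_decay_general (n : ℕ) (hn : 2 ≤ n) (α : ℝ) (hα : 1 < α)
    (q : ℝ) (hq : (α * (n - 1) + 1) / (α * (n - 1) - 1) < q)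
    (ψ : ℝ → ℝ)
    (hψcont : ContinuousOn ψ (Ici 0))
    (hψC1 : ContDiffOn ℝ 1 ψ (Ioi 0))
    (hψpos : ∀ r > (0:ℝ), 0 < ψ r)
    (κ₁ κ₂ R : ℝ) (hκ₁ : 0 < κ₁) (hκ₂ : 0 < κ₂)
    (hψinf : ∀ r ≥ R, κ₁ * r ^ α ≤ ψ r ∧ ψ r ≤ κ₂ * r ^ α)
    (u : ℝ → ℝ) (hu : ContDiff ℝ 2 u)
    (hupos : ∀ r : ℝ, 0 ≤ r → 0 < u r)
    (hu'0 : deriv u 0 = 0)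
    (heq : ∀ r > (0:ℝ),
      -deriv (fun s => ψ s ^ (n - 1) * deriv u s) r = ψ r ^ (n - 1) * u r ^ q) :
    ∃ C > (0:ℝ), ∀ r ≥ (0:ℝ), u r ≤ C * (r + 1) ^ (-(2 / (q - 1))) := by
  have hm : ((n - 1 : ℕ) : ℝ) = n - 1 := by rw [Nat.cast_sub (by omega), Nat.cast_one]
  set β : ℝ := α * (n - 1)
  have hβ : 1 < β := by
    have : (1 : ℝ) ≤ n - 1 := by linarith [(Nat.ofNat_le_cast.2 hn : (2 : ℝ) ≤ n)]
    nlinarith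
  have hq1 : 1 < q := lt_trans ((one_lt_div (by linarith)).2 (by linarith)) hq
  set ρ : ℝ := max R 1
  have hρ : 1 ≤ ρ := le_max_right R 1
  have hw : ∀ s ≥ ρ,
      κ₁ ^ (n - 1) * s ^ β ≤ ψ s ^ (n - 1) ∧ ψ s ^ (n - 1) ≤ κ₂ ^ (n - 1) * s ^ β := by
    intro s hs
    have h := pow_mem_rpow_bounds (by linarith) hκ₁.le
      (hψinf s ((le_max_left R 1).trans hs)) (n - 1)
    rwa [hm] at h
  have hud : Differentiable ℝ u := hu.differentiable (by norm_num)
  have hflux : ∀ r > 0, HasDerivAt (fun s => ψ s ^ (n - 1) * deriv u s)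
      (-(ψ r ^ (n - 1) * u r ^ q)) r := by
    intro r hr
    have hψr : DifferentiableAt ℝ ψ r :=
      (hψC1.differentiableOn one_ne_zero).differentiableAt (Ioi_mem_nhds hr)
    rw [← heq r hr, neg_neg]
    exact ((hψr.pow _).mul (hu.differentiable_deriv_two r)).hasDerivAt
  have hu' : ∀ r > 0, deriv u r ≤ 0 := fun r hr =>
    nonpos_of_hasDerivAt_flux (hψcont.pow _) (fun s hs => pow_pos (hψpos s hs) _)
      (hu.continuous_deriv (by norm_num)) hu'0
      (fun s hs => mul_nonneg (pow_pos (hψpos s hs) _).le (Real.rpow_nonneg (hupos s hs.le).le q))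
      hflux hr
  have hanti : AntitoneOn u (Ici 0) :=
    antitoneOn_of_deriv_nonpos (convex_Ici 0) hud.continuous.continuousOn hud.differentiableOn
      (by simpa using hu')
  set c := κ₁ ^ (n - 1) / (2 * (β + 1) * κ₂ ^ (n - 1))
  have hode : ∀ r ≥ 2 * ρ, c * r * u r ^ q ≤ -deriv u r := fun r hr =>
    mul_rpow_le_neg_deriv (by linarith) hr (by linarith) (by positivity) (by positivity)
      (by linarith) hw (hanti.mono (Ici_subset_Ici.2 (by linarith))) (hupos r (by linarith)).le
      (fun s hs => hu' s (by linarith)) (fun s hs => hflux s (by linarith))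
  have hgrowth : ∀ r ≥ 2 * (2 * ρ), (q - 1) * c / 6 * (r + 1) ^ 2 ≤ u r ^ (1 - q) := fun r hr =>
    mul_sq_le_rpow_one_sub hq1 (by positivity) (by linarith) hr (fun s _ => (hud s).hasDerivAt)
      (fun s hs => hupos s (by linarith)) hode
  exact exists_rpow_bound_of_antitoneOn (by positivity) (by positivity) hanti fun r hr =>
    le_rpow_of_mul_sq_le_rpow_one_sub hq1 (hupos r (by linarith)) (by linarith) (by positivity)
      (hgrowth r hr)

/-- Decay estimate (Lemma 4.2, first half): for `q > 2̃_α` and `ψ` comparable to `r^α`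
at infinity, every global positive radial solution satisfies
`u(r) ≤ C (r+1)^{-2/(q-1)}`. -/
theorem solution_decay (n : ℕ) (hn : 2 ≤ n) (α : ℝ) (hα : 1 < α)
    (q : ℝ) (hq : (α * (n - 1) + 1) / (α * (n - 1) - 1) < q)
    (ψ : ℝ → ℝ)
    (hψcont : ContinuousOn ψ (Ici 0))
    (hψC1 : ContDiffOn ℝ 1 ψ (Ioi 0))
    (hψpos : ∀ r > (0:ℝ), 0 < ψ r)
    (hψ0 : Tendsto (fun r => ψ r / r) (nhdsWithin 0 (Ioi 0)) (nhds 1))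
    (κ₁ κ₂ R : ℝ) (hκ₁ : 0 < κ₁) (hκ₂ : 0 < κ₂) (hR : 0 < R)
    (hψinf : ∀ r ≥ R, κ₁ * r ^ α ≤ ψ r ∧ ψ r ≤ κ₂ * r ^ α)
    (u : ℝ → ℝ) (hu : ContDiff ℝ 2 u)
    (hupos : ∀ r : ℝ, 0 ≤ r → 0 < u r)
    (hu'0 : deriv u 0 = 0)
    (heq : ∀ r > (0:ℝ),
      -deriv (fun s => ψ s ^ (n - 1) * deriv u s) r = ψ r ^ (n - 1) * u r ^ q) :
    ∃ C > (0:ℝ), ∀ r ≥ (0:ℝ), u r ≤ C * (r + 1) ^ (-(2 / (q - 1))) :=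
  solution_decay_general n hn α hα q hq ψ hψcont hψC1 hψpos κ₁ κ₂ R hκ₁ hκ₂ hψinf u hu hupos hu'0
    heq
end

section
/- Let n ≥ 2, α > 1, q > 2̃_α, ψ a model function with κ₁ r^α ≤ ψ(r) ≤ κ₂ r^α for large r, and u a global positive decreasing solution of -(ψ^{n-1}u')' = ψ^{n-1}u^q with u(r) ≤ C(r+1)^{-2/(q-1)}. Then |u'(r)| ≤ C'(r+1)^{-2/(q-1)-1} for all r ≥ 0, for some C' > 0. -/
open Set Filter

/-!
With `g = ψ^(n-1) u'`, the equation reads `g' = -ψ^(n-1) u^q`, and for large `s` the bounds on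
`ψ` and `u` give `|g'(s)| ≲ (s+1)^β` with `β = α(n-1) - 2q/(q-1)`. The condition `q > 2̃_α` is
exactly `β > -1`, so integrating yields `|g(r)| ≲ (r+1)^(β+1)`; dividing by
`ψ^(n-1) ≳ (r+1)^(α(n-1))` leaves `|u'(r)| ≲ (r+1)^(1 - 2q/(q-1)) = (r+1)^(-2/(q-1)-1)`.
On the remaining compact interval, continuity of `u'` suffices.
-/

theorem norm_le_of_norm_deriv_le_mul_add_one_rpow {E : Type*} [NormedAddCommGroup E]
    [NormedSpace ℝ E] {f f' : ℝ → E} {a K β : ℝ} (ha : 0 ≤ a) (hβ : 0 < β + 1) (hK : 0 ≤ K)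
    (hf : ∀ x ≥ a, HasDerivAt f (f' x) x) (hf' : ∀ x ≥ a, ‖f' x‖ ≤ K * (x + 1) ^ β) :
    ∀ x ≥ a, ‖f x‖ ≤ (‖f a‖ + K / (β + 1)) * (x + 1) ^ (β + 1) := by
  intro x hx
  set B : ℝ → ℝ := fun y => ‖f a‖ + K / (β + 1) * ((y + 1) ^ (β + 1) - (a + 1) ^ (β + 1))
  have hB : ∀ y ≥ a, HasDerivAt B (K * (y + 1) ^ β) y := by
    intro y hy
    have hy1 : y + 1 ≠ 0 := by linarith
    refine (((((hasDerivAt_id' y).add_const 1).rpow_const (p := β + 1) (Or.inl hy1)).sub_const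
      ((a + 1) ^ (β + 1))).const_mul (K / (β + 1)) |>.const_add ‖f a‖).congr_deriv ?_
    rw [add_sub_cancel_right]
    field_simp
  have hfB : ‖f x‖ ≤ B x := image_norm_le_of_norm_deriv_right_le_deriv_boundary'
    (fun y hy => (hf y hy.1).continuousAt.continuousWithinAt)
    (fun y hy => (hf y hy.1).hasDerivWithinAt) (by simp [B])
    (fun y hy => (hB y hy.1).continuousAt.continuousWithinAt)
    (fun y hy => (hB y hy.1).hasDerivWithinAt) (fun y hy => hf' y hy.1) ⟨hx, le_rfl⟩
  have h1 : 1 ≤ (x + 1) ^ (β + 1) := Real.one_le_rpow (by linarith) hβ.le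
  have h2 : 0 ≤ K / (β + 1) * (a + 1) ^ (β + 1) := by positivity
  calc ‖f x‖ ≤ B x := hfB
    _ ≤ _ := by simp only [B]; nlinarith [norm_nonneg (f a)]

theorem pow_le_mul_add_one_rpow {κ α x y : ℝ} (m : ℕ) (hα : 0 ≤ α) (hκ : 0 ≤ κ) (hx : 0 ≤ x)
    (hy : 0 ≤ y) (hyx : y ≤ κ * x ^ α) : y ^ m ≤ κ ^ m * (x + 1) ^ (α * m) := by
  rw [Real.rpow_mul (by linarith), Real.rpow_natCast, ← mul_pow]
  gcongr
  calc y ≤ κ * x ^ α := hyx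
    _ ≤ κ * (x + 1) ^ α := by gcongr; linarith

theorem mul_add_one_rpow_le_pow {κ α x y : ℝ} (m : ℕ) (hα : 0 ≤ α) (hκ : 0 ≤ κ) (hx : 1 ≤ x)
    (hxy : κ * x ^ α ≤ y) : (κ / 2 ^ α) ^ m * (x + 1) ^ (α * m) ≤ y ^ m := by
  rw [Real.rpow_mul (by linarith), Real.rpow_natCast, ← mul_pow]
  gcongr
  calc κ / 2 ^ α * (x + 1) ^ α = κ * ((x + 1) / 2) ^ α := by
        rw [Real.div_rpow (by linarith) zero_le_two]; ring
    _ ≤ κ * x ^ α := by gcongr; linarith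
    _ ≤ y := hxy

theorem exists_abs_le_mul_add_one_rpow {h : ℝ → ℝ} {p C₁ R : ℝ} (hh : ContinuousOn h (Ici 0))
    (hfar : ∀ r ≥ R, |h r| ≤ C₁ * (r + 1) ^ p) :
    ∃ C' > 0, ∀ r ≥ 0, |h r| ≤ C' * (r + 1) ^ p := by
  have hcont : ContinuousOn (fun r => h r * (r + 1) ^ (-p)) (Icc 0 R) :=
    (hh.mono Icc_subset_Ici_self).mul <| (continuous_add_const 1).continuousOn.rpow_const
      fun r hr => Or.inl (by linarith [hr.1])
  obtain ⟨M, hM⟩ := isCompact_Icc.exists_bound_of_continuousOn hcont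
  refine ⟨max (max C₁ M) 1, by positivity, fun r hr => ?_⟩
  have hr1 : 0 < (r + 1) ^ p := by positivity
  rcases le_total r R with hrR | hRr
  · have hnear := hM r ⟨hr, hrR⟩
    rw [Real.norm_eq_abs, abs_mul, abs_of_pos (by positivity : 0 < (r + 1) ^ (-p)),
      Real.rpow_neg (by linarith), ← div_eq_mul_inv, div_le_iff₀ hr1] at hnear
    exact hnear.trans (by gcongr; exact (le_max_right _ _).trans (le_max_left _ _))
  · exact (hfar r hRr).trans (by gcongr; exact (le_max_left _ _).trans (le_max_left _ _))

theorem one_lt_and_two_div_sub_one_mul_lt {X q : ℝ} (hX : 1 < X) (hq : (X + 1) / (X - 1) < q) :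
    1 < q ∧ 2 / (q - 1) * q < X + 1 := by
  rw [div_lt_iff₀ (by linarith)] at hq
  have hq1 : 1 < q := by nlinarith
  refine ⟨hq1, ?_⟩
  rw [div_mul_eq_mul_div, div_lt_iff₀ (by linarith)]
  nlinarith

theorem pow_mul_rpow_le_mul_add_one_rpow {κ α C e q r y v : ℝ} (m : ℕ) (hα : 0 ≤ α)
    (hq : 0 ≤ q) (hκ : 0 ≤ κ) (hC : 0 ≤ C) (hr : 0 ≤ r) (hy0 : 0 ≤ y) (hy : y ≤ κ * r ^ α)
    (hv0 : 0 ≤ v) (hv : v ≤ C * (r + 1) ^ (-e)) :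
    y ^ m * v ^ q ≤ κ ^ m * C ^ q * (r + 1) ^ (α * m - e * q) := by
  have hr1 : 0 < r + 1 := by linarith
  have hvq : v ^ q ≤ C ^ q * (r + 1) ^ (-e * q) :=
    calc v ^ q ≤ (C * (r + 1) ^ (-e)) ^ q := Real.rpow_le_rpow hv0 hv hq
      _ = _ := by rw [Real.mul_rpow hC (by positivity), ← Real.rpow_mul hr1.le]
  calc y ^ m * v ^ q ≤ (κ ^ m * (r + 1) ^ (α * m)) * (C ^ q * (r + 1) ^ (-e * q)) := by
        gcongr
        exact pow_le_mul_add_one_rpow m hα hκ hr hy0 hy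
    _ = _ := by rw [sub_eq_add_neg, Real.rpow_add hr1, ← neg_mul]; ring

theorem abs_deriv_le_of_hasDerivAt_pow_mul_deriv {ψ u : ℝ → ℝ} {m : ℕ} {α q e κ₁ κ₂ C R : ℝ}
    (hR : 1 ≤ R) (hα : 0 ≤ α) (hq : 0 ≤ q) (hκ₁ : 0 < κ₁) (hκ₂ : 0 ≤ κ₂) (hC : 0 ≤ C)
    (hexp : 0 < α * m - e * q + 1)
    (hψ : ∀ r ≥ R, κ₁ * r ^ α ≤ ψ r ∧ ψ r ≤ κ₂ * r ^ α)
    (hu : ∀ r ≥ R, 0 ≤ u r ∧ u r ≤ C * (r + 1) ^ (-e))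
    (hg : ∀ r ≥ R, HasDerivAt (fun s => ψ s ^ m * deriv u s) (-(ψ r ^ m * u r ^ q)) r) :
    ∃ C₁, ∀ r ≥ R, |deriv u r| ≤ C₁ * (r + 1) ^ (1 - e * q) := by
  set K := κ₂ ^ m * C ^ q
  have hψ0 : ∀ r ≥ R, 0 ≤ ψ r := fun r hr =>
    (mul_nonneg hκ₁.le (Real.rpow_nonneg (by linarith) _)).trans (hψ r hr).1
  have hg' : ∀ r ≥ R, ‖-(ψ r ^ m * u r ^ q)‖ ≤ K * (r + 1) ^ (α * m - e * q) := fun r hr => by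
    have := (hu r hr).1
    rw [norm_neg, Real.norm_of_nonneg (by have := hψ0 r hr; positivity)]
    exact pow_mul_rpow_le_mul_add_one_rpow m hα hq hκ₂ hC (by linarith) (hψ0 r hr) (hψ r hr).2
      (hu r hr).1 (hu r hr).2
  have hg_bound := norm_le_of_norm_deriv_le_mul_add_one_rpow (by linarith) hexp (by positivity)
    hg hg'
  set A := ‖ψ R ^ m * deriv u R‖ + K / (α * m - e * q + 1)
  refine ⟨A / (κ₁ / 2 ^ α) ^ m, fun r hr => ?_⟩
  have hr1 : 0 < r + 1 := by linarith
  have hc : 0 < (κ₁ / 2 ^ α) ^ m := by positivity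
  have hlow := mul_add_one_rpow_le_pow m hα hκ₁.le (hR.trans hr) (hψ r hr).1
  have key : (κ₁ / 2 ^ α) ^ m * (r + 1) ^ (α * m) * |deriv u r|
      ≤ A * (r + 1) ^ (1 - e * q) * (r + 1) ^ (α * m) :=
    calc _ ≤ ψ r ^ m * |deriv u r| := by gcongr
      _ = ‖ψ r ^ m * deriv u r‖ := by
          rw [norm_mul, norm_pow, Real.norm_of_nonneg (hψ0 r hr), Real.norm_eq_abs]
      _ ≤ A * (r + 1) ^ (α * m - e * q + 1) := hg_bound r hr
      _ = _ := by rw [mul_assoc, ← Real.rpow_add hr1]; ring_nf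
  rw [div_mul_eq_mul_div, le_div_iff₀ hc]
  have := Real.rpow_pos_of_pos hr1 (α * m)
  nlinarith

theorem gradient_decay_general (n : ℕ) (hn : 2 ≤ n) (α : ℝ) (hα : 1 < α)
    (q : ℝ) (hq : (α * (n - 1) + 1) / (α * (n - 1) - 1) < q)
    (ψ : ℝ → ℝ)
    (hψC1 : ContDiffOn ℝ 1 ψ (Ioi 0))
    (κ₁ κ₂ R : ℝ) (hκ₁ : 0 < κ₁) (hκ₂ : 0 < κ₂)
    (hψinf : ∀ r ≥ R, κ₁ * r ^ α ≤ ψ r ∧ ψ r ≤ κ₂ * r ^ α)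
    (u : ℝ → ℝ) (hu : ContDiff ℝ 2 u)
    (hupos : ∀ r : ℝ, 0 ≤ r → 0 < u r)
    (heq : ∀ r > (0:ℝ),
      -deriv (fun s => ψ s ^ (n - 1) * deriv u s) r = ψ r ^ (n - 1) * u r ^ q)
    (C : ℝ) (hC : 0 < C)
    (hdecay : ∀ r ≥ (0:ℝ), u r ≤ C * (r + 1) ^ (-(2 / (q - 1)))) :
    ∃ C' > (0:ℝ), ∀ r ≥ (0:ℝ),
      |deriv u r| ≤ C' * (r + 1) ^ (-(2 / (q - 1)) - 1) := by
  have hm : ((n - 1 : ℕ) : ℝ) = n - 1 := by rw [Nat.cast_sub (by omega), Nat.cast_one]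
  have hX : 1 < α * ((n - 1 : ℕ) : ℝ) := by
    rw [hm]; nlinarith [show (2 : ℝ) ≤ n by exact_mod_cast hn]
  obtain ⟨hq1, hexp⟩ := one_lt_and_two_div_sub_one_mul_lt hX (by rwa [hm])
  have hflux : ∀ r ≥ max R 1, HasDerivAt (fun s => ψ s ^ (n - 1) * deriv u s)
      (-(ψ r ^ (n - 1) * u r ^ q)) r := by
    intro r hr
    have hr0 : 0 < r := by linarith [le_max_right R 1]
    have hψr := (hψC1.differentiableOn one_ne_zero).differentiableAt (Ioi_mem_nhds hr0)
    rw [← heq r hr0, neg_neg]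
    exact ((hψr.pow _).mul (hu.differentiable_deriv_two r)).hasDerivAt
  obtain ⟨C₁, hfar⟩ := abs_deriv_le_of_hasDerivAt_pow_mul_deriv (le_max_right R 1)
    (by linarith) (by linarith) hκ₁ hκ₂.le hC.le (by linarith)
    (fun r hr => hψinf r (le_of_max_le_left hr))
    (fun r hr => have hr0 : 0 ≤ r := by linarith [le_max_right R 1]
      ⟨(hupos r hr0).le, hdecay r hr0⟩) hflux
  have hexp_eq : 1 - 2 / (q - 1) * q = -(2 / (q - 1)) - 1 := by
    field_simp [(by linarith : q - 1 ≠ 0)]; ring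
  rw [hexp_eq] at hfar
  exact exists_abs_le_mul_add_one_rpow (hu.continuous_deriv (by norm_num)).continuousOn hfar

/-- Gradient decay (Lemma 4.2, second half): under the same hypotheses, if moreover
`u` is decreasing and `u(r) ≤ C (r+1)^{-2/(q-1)}`, then
`|u'(r)| ≤ C' (r+1)^{-2/(q-1)-1}`. -/
theorem gradient_decay (n : ℕ) (hn : 2 ≤ n) (α : ℝ) (hα : 1 < α)
    (q : ℝ) (hq : (α * (n - 1) + 1) / (α * (n - 1) - 1) < q)
    (ψ : ℝ → ℝ)
    (hψcont : ContinuousOn ψ (Ici 0))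
    (hψC1 : ContDiffOn ℝ 1 ψ (Ioi 0))
    (hψpos : ∀ r > (0:ℝ), 0 < ψ r)
    (hψ0 : Tendsto (fun r => ψ r / r) (nhdsWithin 0 (Ioi 0)) (nhds 1))
    (κ₁ κ₂ R : ℝ) (hκ₁ : 0 < κ₁) (hκ₂ : 0 < κ₂) (hR : 0 < R)
    (hψinf : ∀ r ≥ R, κ₁ * r ^ α ≤ ψ r ∧ ψ r ≤ κ₂ * r ^ α)
    (u : ℝ → ℝ) (hu : ContDiff ℝ 2 u)
    (hupos : ∀ r : ℝ, 0 ≤ r → 0 < u r)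
    (hu'0 : deriv u 0 = 0)
    (hdec : AntitoneOn u (Ici 0))
    (heq : ∀ r > (0:ℝ),
      -deriv (fun s => ψ s ^ (n - 1) * deriv u s) r = ψ r ^ (n - 1) * u r ^ q)
    (C : ℝ) (hC : 0 < C)
    (hdecay : ∀ r ≥ (0:ℝ), u r ≤ C * (r + 1) ^ (-(2 / (q - 1)))) :
    ∃ C' > (0:ℝ), ∀ r ≥ (0:ℝ),
      |deriv u r| ≤ C' * (r + 1) ^ (-(2 / (q - 1)) - 1) :=
  gradient_decay_general n hn α hα q hq ψ hψC1 κ₁ κ₂ R hκ₁ hκ₂ hψinf u hu hupos heq C hC hdecay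
end

section
/- Let n ≥ 2, α > 1, set m := α(n-1) and 2*_α := 2(m+1)/(m-1), and let L > 0, ℓ > 0, κ > 0 satisfy L^{2*_α - 2} = ((m-1)/2)² and (α^{n-1}/κ^{n-1})·ℓ = (1/(m+1))·[ (1/2)((m-1)/2)² L² + L^{2*_α}/2*_α ] - ((m-1)/2)·(L²/2*_α). Then ℓ < 0, a contradiction; hence no such positive ℓ exists. -/
/-- Final algebraic contradiction in the critical case `q = 2*_α - 1`: with
`m = α(n-1)`, `2*_α = 2(m+1)/(m-1)`, if `L, ℓ, κ > 0` satisfy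
`L^{2*_α-2} = ((m-1)/2)²` and the Pohozaev limit identity, then we reach `False`. -/
theorem critical_pohozaev_contradiction (n : ℕ) (hn : 2 ≤ n) (α : ℝ) (hα : 1 < α)
    (L ℓ κ : ℝ) (hL : 0 < L) (hℓ : 0 < ℓ) (hκ : 0 < κ)
    (hLval : L ^ (2 * (α * (n - 1) + 1) / (α * (n - 1) - 1) - 2)
        = ((α * (n - 1) - 1) / 2) ^ 2)
    (hid : α ^ (n - 1) / κ ^ (n - 1) * ℓ
        = 1 / (α * (n - 1) + 1) *
            (1 / 2 * ((α * (n - 1) - 1) / 2) ^ 2 * L ^ 2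
              + L ^ (2 * (α * (n - 1) + 1) / (α * (n - 1) - 1))
                  / (2 * (α * (n - 1) + 1) / (α * (n - 1) - 1)))
          - (α * (n - 1) - 1) / 2 *
              (L ^ 2 / (2 * (α * (n - 1) + 1) / (α * (n - 1) - 1)))) :
    False := by
  set m : ℝ := α * ((n : ℝ) - 1) with hmdef
  clear_value m
  have hn1 : (1 : ℝ) ≤ (n : ℝ) - 1 := by
    have : (2 : ℝ) ≤ (n : ℝ) := by exact_mod_cast hn
    linarith
  have hm : 1 < m := by
    have h0 : (0 : ℝ) < α := lt_trans one_pos hα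
    rw [hmdef]; nlinarith
  have hmm1 : 0 < m - 1 := by linarith
  have hmp1 : 0 < m + 1 := by linarith
  have key : L ^ (2 * (m + 1) / (m - 1)) = ((m - 1) / 2) ^ 2 * L ^ 2 := by
    rw [show 2 * (m + 1) / (m - 1) = (2 * (m + 1) / (m - 1) - 2) + 2 by ring,
      Real.rpow_add hL, hLval]
    rw [show (2:ℝ) = ((2:ℕ):ℝ) by norm_num, Real.rpow_natCast]
  rw [key] at hid
  have hpos : 0 < α ^ (n - 1) / κ ^ (n - 1) * ℓ := by positivity
  rw [hid] at hpos
  have hneg : 1 / (m + 1) *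
      (1 / 2 * ((m - 1) / 2) ^ 2 * L ^ 2
        + ((m - 1) / 2) ^ 2 * L ^ 2 / (2 * (m + 1) / (m - 1)))
      - (m - 1) / 2 * (L ^ 2 / (2 * (m + 1) / (m - 1)))
      = -((m - 1) ^ 2 * L ^ 2) / (4 * (m + 1) ^ 2) := by
    have e1 : m - 1 ≠ 0 := ne_of_gt hmm1
    have e2 : m + 1 ≠ 0 := ne_of_gt hmp1
    field_simp
    ring
  rw [hneg] at hpos
  have h2 : 0 < (m - 1) ^ 2 * L ^ 2 := by positivity
  have : -((m - 1) ^ 2 * L ^ 2) / (4 * (m + 1) ^ 2) < 0 := by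
    apply div_neg_of_neg_of_pos
    · linarith
    · positivity
  linarith
end
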